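/- arXiv:2403.11244 — 8 statements merged into one kernel-verified Lean document; each statement's English description precedes it below -/
import Mathlib

section
/- Let R be a field (e.g. the rationals), and let s(x) = Σ_{n≥0} s_n x^n be a formal power series over R with s_0 = 1, and let t(x) = 1/s(x) = Σ_{n≥0} t_n x^n be its multiplicative inverse. Extend the coefficient sequences by s_n = t_n = 0 for n < 0. Then for every natural number M and every positive integer N, det((s_{i+j-M})_{i,j=0}^{N+M}) = (-1)^{N + binom(M+1,2)} · det((t_{i+j+M+2})_{i,j=0}^{N-1}), where the left-hand matrix has size (N+M+1)×(N+M+1) and the right-hand matrix has size N×N. -/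
/-!
Let `A = (s_{i+j-M})`, the Hankel matrix of `X ^ M * s`, and let `T = (t_{j-i})` be the upper
unitriangular Toeplitz matrix of `t`, both of size `M + 1 + N`. Since `X ^ M * s * t = X ^ M`,
splitting the convolution gives
`(A * T)_{ik} = [i + k = M] - ∑_{a < i} coeff a (X ^ M * s) t_{i+k-a}`.
The sum vanishes for `i ≤ M`, so the first `M + 1` rows of `A * T` are the exchange matrix padded
by zeros; for `i, k > M` what is left is `-(H * U)ᵀ` with `H = (t_{i+j+M+2})` and `U = (s_{j-i})`
unitriangular. Hence `det A = det (A * T) = (-1) ^ binom(M+1, 2) * (-1) ^ N * det H`.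
-/

open Finset Matrix PowerSeries

namespace Matrix

variable {R : Type*}

def exchange [Zero R] [One R] (n : ℕ) : Matrix (Fin n) (Fin n) R :=
  of fun i j => if (i + j + 1 : ℕ) = n then 1 else 0

theorem det_exchange [CommRing R] (n : ℕ) :
    (exchange n : Matrix (Fin n) (Fin n) R).det = (-1) ^ n.choose 2 := by
  induction n with
  | zero => simp
  | succ n ih =>
    rw [det_succ_row_zero, sum_eq_single (Fin.last n)]
    · have hminor : (exchange (n + 1) : Matrix _ _ R).submatrix Fin.succ (Fin.last n).succAbove =
          exchange n := by
        ext i j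
        simp [exchange, Fin.succAbove_last, add_right_comm]
      rw [hminor, ih, Nat.choose_succ_succ', Nat.choose_one_right, pow_add]
      simp [exchange]
    · intro j _ hj
      have : (j : ℕ) ≠ n := fun h => hj (Fin.ext h)
      simp [exchange, this]
    · simp

end Matrix

namespace PowerSeries

variable {R : Type*} [CommRing R]

noncomputable def hankelMatrix (u : R⟦X⟧) (n : ℕ) : Matrix (Fin n) (Fin n) R :=
  of fun i j => coeff (i + j : ℕ) u

-- `coeff j (X ^ i * f)` is `f_{j-i}` for `i ≤ j` and `0` otherwise.
noncomputable def upperToeplitz (f : R⟦X⟧) (n : ℕ) : Matrix (Fin n) (Fin n) R :=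
  of fun i j => coeff (j : ℕ) (X ^ (i : ℕ) * f)

theorem det_upperToeplitz {f : R⟦X⟧} (hf : coeff 0 f = 1) (n : ℕ) :
    (upperToeplitz f n).det = 1 := by
  have htri : (upperToeplitz f n).BlockTriangular id := fun i j (hji : j < i) => by
    rw [upperToeplitz, of_apply, coeff_X_pow_mul', if_neg (not_le.2 (Fin.lt_def.1 hji))]
  rw [det_of_isUpperTriangular htri]
  exact prod_eq_one fun i _ => by simp [upperToeplitz, coeff_X_pow_mul', hf]

theorem coeff_add_mul (f g : R⟦X⟧) (d k : ℕ) :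
    coeff (d + k) (f * g) = ∑ a ∈ range d, coeff a f * coeff (d + k - a) g +
      ∑ j ∈ range (k + 1), coeff (d + j) f * coeff (k - j) g := by
  rw [coeff_mul, Nat.sum_antidiagonal_eq_sum_range_succ_mk, Nat.succ_eq_add_one, add_assoc,
    sum_range_add]
  congr 1
  refine sum_congr rfl fun j _ => ?_
  rw [Nat.add_sub_add_left]

theorem hankelMatrix_mul_upperToeplitz_apply (u f : R⟦X⟧) {n : ℕ} (i k : Fin n) :
    (hankelMatrix u n * upperToeplitz f n) i k =
      ∑ j ∈ range (k + 1), coeff (i + j : ℕ) u * coeff (k - j : ℕ) f := by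
  rw [mul_apply]
  simp only [hankelMatrix, upperToeplitz, of_apply, coeff_X_pow_mul', mul_ite, mul_zero]
  rw [Fin.sum_univ_eq_sum_range (fun j => if j ≤ k then coeff (i + j) u * coeff (k - j) f else 0),
    ← sum_filter]
  congr 1
  ext j
  simp only [mem_filter, mem_range]
  omega

theorem hankelMatrix_mul_upperToeplitz_apply_eq_sub (u f : R⟦X⟧) {n : ℕ} (i k : Fin n) :
    (hankelMatrix u n * upperToeplitz f n) i k =
      coeff (i + k : ℕ) (u * f) - ∑ a ∈ range i, coeff a u * coeff (i + k - a : ℕ) f := by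
  rw [coeff_add_mul, add_sub_cancel_left, hankelMatrix_mul_upperToeplitz_apply]

variable {s t : R⟦X⟧}

theorem coeff_zero_eq_one_of_mul_eq_one (hs0 : coeff 0 s = 1) (hst : s * t = 1) :
    coeff 0 t = 1 := by
  have h := congrArg constantCoeff hst
  rwa [map_mul, map_one, ← coeff_zero_eq_constantCoeff_apply, hs0, one_mul,
    ← coeff_zero_eq_constantCoeff_apply] at h

theorem hankelMatrix_X_pow_mul_upperToeplitz_apply_of_le (hst : s * t = 1) {M n : ℕ}
    {i : Fin n} (hi : (i : ℕ) ≤ M) (k : Fin n) :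
    (hankelMatrix (X ^ M * s) n * upperToeplitz t n : Matrix (Fin n) (Fin n) R) i k =
      if (i + k : ℕ) = M then 1 else 0 := by
  rw [hankelMatrix_mul_upperToeplitz_apply_eq_sub, mul_assoc, hst, mul_one, coeff_X_pow,
    sum_eq_zero, sub_zero]
  intro a ha
  rw [coeff_X_pow_mul', if_neg (by rw [mem_range] at ha; omega), zero_mul]

section Blocks

variable (s t) (M N : ℕ)

noncomputable abbrev hankelToeplitzBlocks :
    Matrix (Fin (M + 1) ⊕ Fin N) (Fin (M + 1) ⊕ Fin N) R :=
  (hankelMatrix (X ^ M * s) (M + 1 + N) * upperToeplitz t (M + 1 + N)).submatrix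
    finSumFinEquiv finSumFinEquiv

variable {s t}

theorem toBlocks₁₁_hankelToeplitzBlocks (hst : s * t = 1) :
    (hankelToeplitzBlocks s t M N).toBlocks₁₁ = exchange (M + 1) := by
  ext i k
  simp only [toBlocks₁₁, of_apply, submatrix_apply, finSumFinEquiv_apply_left]
  rw [hankelMatrix_X_pow_mul_upperToeplitz_apply_of_le hst (by rw [Fin.val_castAdd]; omega)]
  simp [exchange]

theorem toBlocks₁₂_hankelToeplitzBlocks (hst : s * t = 1) :
    (hankelToeplitzBlocks s t M N).toBlocks₁₂ = 0 := by
  ext i k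
  simp only [toBlocks₁₂, of_apply, submatrix_apply, finSumFinEquiv_apply_left,
    finSumFinEquiv_apply_right]
  rw [hankelMatrix_X_pow_mul_upperToeplitz_apply_of_le hst (by rw [Fin.val_castAdd]; omega),
    Fin.val_castAdd, Fin.val_natAdd, if_neg (by omega), Matrix.zero_apply]

theorem toBlocks₂₂_hankelToeplitzBlocks (hst : s * t = 1) :
    (hankelToeplitzBlocks s t M N).toBlocks₂₂ =
      -(hankelMatrix (mk fun m => coeff (m + M + 2) t) N * upperToeplitz s N :
        Matrix (Fin N) (Fin N) R)ᵀ := by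
  ext i k
  simp only [toBlocks₂₂, of_apply, submatrix_apply, finSumFinEquiv_apply_right,
    Matrix.neg_apply, Matrix.transpose_apply]
  rw [hankelMatrix_mul_upperToeplitz_apply_eq_sub, hankelMatrix_mul_upperToeplitz_apply,
    Fin.val_natAdd, Fin.val_natAdd, mul_assoc, hst, mul_one, coeff_X_pow, if_neg (by omega),
    zero_sub, neg_inj, show M + 1 + (i : ℕ) = M + (i + 1) by ring, sum_range_add,
    sum_eq_zero fun a ha => ?_, zero_add, ← sum_range_reflect]
  · refine sum_congr rfl fun j hj => ?_
    rw [mem_range] at hj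
    rw [coeff_mk, mul_comm, add_comm M (_ - j), coeff_X_pow_mul]
    congr 3
    omega
  · rw [coeff_X_pow_mul', if_neg (by rw [mem_range] at ha; omega), zero_mul]

end Blocks

theorem det_hankelMatrix_X_pow_mul (hs0 : coeff 0 s = 1) (hst : s * t = 1) (M N : ℕ) :
    (hankelMatrix (X ^ M * s) (M + 1 + N)).det =
      (-1) ^ (N + (M + 1).choose 2) * (hankelMatrix (mk fun m => coeff (m + M + 2) t) N).det := by
  set H := hankelMatrix (mk fun m => coeff (m + M + 2) t) N
  calc (hankelMatrix (X ^ M * s) (M + 1 + N)).det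
      = (hankelMatrix (X ^ M * s) (M + 1 + N) * upperToeplitz t (M + 1 + N)).det := by
        rw [det_mul, det_upperToeplitz (coeff_zero_eq_one_of_mul_eq_one hs0 hst), mul_one]
    _ = (hankelToeplitzBlocks s t M N).det := (det_submatrix_equiv_self _ _).symm
    _ = (exchange (M + 1) : Matrix _ _ R).det * (-(H * upperToeplitz s N)ᵀ).det := by
        rw [← fromBlocks_toBlocks (hankelToeplitzBlocks s t M N),
          toBlocks₁₂_hankelToeplitzBlocks M N hst, det_fromBlocks_zero₁₂,
          toBlocks₁₁_hankelToeplitzBlocks M N hst, toBlocks₂₂_hankelToeplitzBlocks M N hst]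
    _ = _ := by
        rw [det_exchange, det_neg, det_transpose, det_mul, det_upperToeplitz hs0,
          Fintype.card_fin, pow_add]
        ring

end PowerSeries

theorem stmt0_general {R : Type*} [Field R] (s t : PowerSeries R)
    (hs0 : PowerSeries.coeff 0 s = 1) (hst : s * t = 1)
    (M N : ℕ) :
    Matrix.det (Matrix.of fun i j : Fin (N + M + 1) =>
        if 0 ≤ (i : ℤ) + (j : ℤ) - (M : ℤ) then
          PowerSeries.coeff ((i : ℤ) + (j : ℤ) - (M : ℤ)).toNat s
        else 0) =
      (-1 : R) ^ (N + (M + 1).choose 2) *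
        Matrix.det (Matrix.of fun i j : Fin N =>
          PowerSeries.coeff ((i : ℕ) + (j : ℕ) + M + 2) t) := by
  have hA : (of fun i j : Fin (N + M + 1) =>
      if 0 ≤ (i : ℤ) + (j : ℤ) - (M : ℤ) then
        coeff ((i : ℤ) + (j : ℤ) - (M : ℤ)).toNat s
      else 0) = hankelMatrix (X ^ M * s) (N + M + 1) := by
    ext i j
    simp only [hankelMatrix, of_apply, coeff_X_pow_mul']
    split_ifs
    · congr 2
      omega
    · omega
    · omega
    · rfl
  have hH : (of fun i j : Fin N => coeff ((i : ℕ) + (j : ℕ) + M + 2) t) =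
      hankelMatrix (mk fun m => coeff (m + M + 2) t) N := by
    ext i j
    simp only [hankelMatrix, of_apply, coeff_mk]
  rw [hA, hH, show N + M + 1 = M + 1 + N by ring]
  exact det_hankelMatrix_X_pow_mul hs0 hst M N

/-- Lemma of Andrews–Wimp type: if `t = 1/s` with `s₀ = 1`, then the Hankel determinant of
the backwards-shifted coefficients of `s` equals a signed Hankel determinant of coefficients
of `t`. -/
theorem stmt0 {R : Type*} [Field R] (s t : PowerSeries R)
    (hs0 : PowerSeries.coeff 0 s = 1) (hst : s * t = 1)
    (M N : ℕ) (hN : 0 < N) :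
    Matrix.det (Matrix.of fun i j : Fin (N + M + 1) =>
        if 0 ≤ (i : ℤ) + (j : ℤ) - (M : ℤ) then
          PowerSeries.coeff ((i : ℤ) + (j : ℤ) - (M : ℤ)).toNat s
        else 0) =
      (-1 : R) ^ (N + (M + 1).choose 2) *
        Matrix.det (Matrix.of fun i j : Fin N =>
          PowerSeries.coeff ((i : ℕ) + (j : ℕ) + M + 2) t) :=
  stmt0_general s t hs0 hst M N
end

section
/- Let c(x) = Σ_{n≥0} C_n x^n be the generating function of the Catalan numbers C_n = (1/(n+1))·binom(2n,n), viewed as a formal power series over ℚ. Then for every positive integer k and every natural number n, the coefficient of x^n in c(x)^k equals (k/(n+k))·binom(2n+k-1, n). -/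
/-!
Since `c = 1 + X c²`, we have `c^(k+1) = c^k + X c^(k+2)`, so the coefficients
`a(n, k) = [xⁿ] c^k` satisfy `a(n+1, k+1) = a(n+1, k) + a(n, k+2)` with `a(0, k) = 1` and
`a(n+1, 0) = 0`. The closed form `k/(n+k) · binom(2n+k-1, n)` has the same boundary values and,
after writing all binomials as multiples of `binom(2n+k+1, n)`, satisfies the same recurrence.
-/

open PowerSeries

section FunctionalEquation

variable {R : Type*} [CommSemiring R] {c : R⟦X⟧}

theorem constantCoeff_eq_one_of_sq_mul_X_add_one_eq (hc : c ^ 2 * X + 1 = c) :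
    constantCoeff c = 1 := by
  rw [← hc]; simp

theorem coeff_succ_pow_succ_of_sq_mul_X_add_one_eq (hc : c ^ 2 * X + 1 = c) (n k : ℕ) :
    coeff (n + 1) (c ^ (k + 1)) = coeff (n + 1) (c ^ k) + coeff n (c ^ (k + 2)) := by
  have hpow : c ^ (k + 1) = c ^ k + c ^ (k + 2) * X :=
    calc c ^ (k + 1) = c ^ k * (c ^ 2 * X + 1) := by rw [pow_succ, hc]
      _ = c ^ k + c ^ (k + 2) * X := by ring
  rw [hpow, map_add, coeff_succ_mul_X]

end FunctionalEquation

noncomputable def catalanPowCoeff (n k : ℕ) : ℚ :=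
  (k / (n + k)) * (2 * n + k - 1).choose n

theorem catalanPowCoeff_zero_left {k : ℕ} (hk : 0 < k) : catalanPowCoeff 0 k = 1 := by
  have : (k : ℚ) ≠ 0 := by positivity
  simp [catalanPowCoeff, this]

theorem catalanPowCoeff_succ_zero (n : ℕ) : catalanPowCoeff (n + 1) 0 = 0 := by
  simp [catalanPowCoeff]

theorem catalanPowCoeff_succ_succ (n k : ℕ) :
    catalanPowCoeff (n + 1) (k + 1) = catalanPowCoeff (n + 1) k + catalanPowCoeff n (k + 2) := by
  set N := 2 * n + k + 1
  have h₁ : 2 * (n + 1) + (k + 1) - 1 = N + 1 := by omega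
  have h₂ : 2 * (n + 1) + k - 1 = N := by omega
  have h₃ : 2 * n + (k + 2) - 1 = N := by omega
  have hsucc : ((N + 1).choose (n + 1) : ℚ) = (N + 1) * N.choose n / (n + 1) := by
    rw [eq_div_iff (by positivity)]
    exact_mod_cast (Nat.add_one_mul_choose_eq N n).symm
  have hright : (N.choose (n + 1) : ℚ) = N.choose n * (n + k + 1) / (n + 1) := by
    rw [eq_div_iff (by positivity)]
    have := Nat.choose_succ_right_eq N n
    rw [show N - n = n + k + 1 by omega] at this
    exact_mod_cast this
  simp only [catalanPowCoeff, h₁, h₂, h₃, hsucc, hright, N]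
  push_cast
  field_simp
  ring

theorem coeff_pow_eq_catalanPowCoeff {c : ℚ⟦X⟧} (hc : c ^ 2 * X + 1 = c) (n : ℕ) {k : ℕ}
    (hk : 0 < k) : coeff n (c ^ k) = catalanPowCoeff n k := by
  induction n generalizing k with
  | zero =>
    rw [coeff_zero_eq_constantCoeff_apply, map_pow,
      constantCoeff_eq_one_of_sq_mul_X_add_one_eq hc, one_pow, catalanPowCoeff_zero_left hk]
  | succ n ih =>
    clear hk
    induction k with
    | zero => rw [pow_zero, coeff_one, if_neg n.succ_ne_zero, catalanPowCoeff_succ_zero]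
    | succ k ihk =>
      rw [coeff_succ_pow_succ_of_sq_mul_X_add_one_eq hc, ihk, ih (by omega),
        catalanPowCoeff_succ_succ]

theorem cast_catalan_eq_one_div_mul_choose (n : ℕ) :
    (catalan n : ℚ) = 1 / (n + 1) * (2 * n).choose n := by
  rw [← Nat.centralBinom_eq_two_mul_choose, ← succ_mul_catalan_eq_centralBinom]
  push_cast
  field_simp

/-- Coefficients of powers of the Catalan generating function:
`[xⁿ] c(x)^k = (k/(n+k)) · binom(2n+k-1, n)`. -/
theorem stmt1 (c : PowerSeries ℚ)
    (hc : ∀ n : ℕ, PowerSeries.coeff n c = (1 / (n + 1 : ℚ)) * ((2 * n).choose n))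
    (k : ℕ) (hk : 0 < k) (n : ℕ) :
    PowerSeries.coeff n (c ^ k) =
      ((k : ℚ) / ((n : ℚ) + (k : ℚ))) * ((2 * n + k - 1).choose n) := by
  have hcat : c = map (Nat.castRingHom ℚ) catalanSeries := by
    ext n
    rw [hc, coeff_map, catalanSeries_coeff, eq_natCast, cast_catalan_eq_one_div_mul_choose]
  have hfun : c ^ 2 * X + 1 = c := by
    have := congrArg (map (Nat.castRingHom ℚ)) catalanSeries_sq_mul_X_add_one
    rwa [map_add, map_mul, map_pow, map_X, map_one, ← hcat] at this
  exact coeff_pow_eq_catalanPowCoeff hfun n hk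
end

section
/- Let c(x) = Σ_{n≥0} C_n x^n be the generating function of the Catalan numbers C_n = (1/(n+1))·binom(2n,n), a formal power series over ℚ (invertible since its constant term is 1), and let L_n(x,s) be the bivariate Lucas polynomials (L_0 = 2, L_1 = x, L_n = x·L_{n-1} + s·L_{n-2}). Then for every positive integer k, (x·c(x))^k + c(x)^{-k} = L_k(1, -x), the polynomial L_k evaluated at (1, -x) viewed as a formal power series. -/
/-!
The Catalan series satisfies `c = 1 + X c²`, so `c·(1 - X c) = 1`, i.e. `c⁻¹ = 1 - X c`.
Hence `a = X c` and `b = c⁻¹` have `a + b = 1` and `a b = X`, and the power sums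
`aᵏ + bᵏ` obey the Lucas recurrence with parameters `(a + b, -a b) = (1, -X)`.
-/

/-- The bivariate Lucas polynomials: `L₀(x,s) = 2`, `L₁(x,s) = x`,
`Lₙ(x,s) = x·Lₙ₋₁(x,s) + s·Lₙ₋₂(x,s)`, here with values in any commutative ring. -/
def lucas {R : Type*} [CommRing R] : ℕ → R → R → R
  | 0, _, _ => 2
  | 1, x, _ => x
  | n + 2, x, s => x * lucas (n + 1) x s + s * lucas n x s

open PowerSeries

theorem pow_add_pow_eq_lucas {R : Type*} [CommRing R] (a b : R) :
    ∀ k : ℕ, a ^ k + b ^ k = lucas k (a + b) (-(a * b))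
  | 0 => by norm_num [lucas]
  | 1 => by simp [lucas]
  | n + 2 => by
    rw [lucas, ← pow_add_pow_eq_lucas a b (n + 1), ← pow_add_pow_eq_lucas a b n]
    ring

theorem Nat.cast_catalan_eq_choose_div {K : Type*} [DivisionRing K] [CharZero K] (n : ℕ) :
    (catalan n : K) = (2 * n).choose n / (n + 1) := by
  rw [eq_div_iff n.cast_add_one_ne_zero, ← Nat.centralBinom_eq_two_mul_choose,
    ← succ_mul_catalan_eq_centralBinom, mul_comm, Nat.cast_mul, Nat.cast_succ]

theorem PowerSeries.inv_eq_one_sub_X_mul {K : Type*} [Field K] {c : K⟦X⟧}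
    (hc : c ^ 2 * X + 1 = c) : c⁻¹ = 1 - X * c := by
  have hmul : (1 - X * c) * c = 1 := by linear_combination -hc
  refine (inv_eq_iff_mul_eq_one fun h0 => ?_).2 hmul
  simpa [h0] using congrArg constantCoeff hmul

theorem stmt4_general (c : PowerSeries ℚ)
    (hc : ∀ n : ℕ, PowerSeries.coeff n c = (1 / (n + 1 : ℚ)) * ((2 * n).choose n))
    (k : ℕ) :
    (PowerSeries.X * c) ^ k + c⁻¹ ^ k = lucas k (1 : PowerSeries ℚ) (-PowerSeries.X) := by
  have hcat : c = map (Nat.castRingHom ℚ) catalanSeries := by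
    ext n
    rw [hc, coeff_map, catalanSeries_coeff, eq_natCast, Nat.cast_catalan_eq_choose_div]
    ring
  have hquad : c ^ 2 * X + 1 = c := by
    rw [hcat, ← map_X (Nat.castRingHom ℚ), ← map_pow, ← map_mul, ← map_one (map (Nat.castRingHom ℚ)), ← map_add,
      catalanSeries_sq_mul_X_add_one]
  rw [pow_add_pow_eq_lucas, inv_eq_one_sub_X_mul hquad]
  congr 1
  · ring
  · linear_combination X * hquad

/-- For the Catalan generating function `c`, `(x·c(x))^k + c(x)^{-k} = L_k(1, -x)`. -/
theorem stmt4 (c : PowerSeries ℚ)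
    (hc : ∀ n : ℕ, PowerSeries.coeff n c = (1 / (n + 1 : ℚ)) * ((2 * n).choose n))
    (k : ℕ) (hk : 0 < k) :
    (PowerSeries.X * c) ^ k + c⁻¹ ^ k = lucas k (1 : PowerSeries ℚ) (-PowerSeries.X) :=
  stmt4_general c hc k
end

section
/- Let L_n(x,s) be the bivariate Lucas polynomials defined by L_0(x,s) = 2, L_1(x,s) = x, and L_n(x,s) = x·L_{n-1}(x,s) + s·L_{n-2}(x,s) for n ≥ 2. Then for every natural number k, the univariate polynomial identity L_{2k}(1, -x) = L_k(1 - 2x, -x^2) holds (as polynomials in x over ℚ). -/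
lemma lucas_step {R : Type*} [CommRing R] (x s : R) (n : ℕ) :
    lucas (n + 4) x s = (x ^ 2 + 2 * s) * lucas (n + 2) x s + (-(s ^ 2)) * lucas n x s := by
  simp only [lucas]
  ring

lemma lucas_double {R : Type*} [CommRing R] (x s : R) :
    ∀ k, lucas (2 * k) x s = lucas k (x ^ 2 + 2 * s) (-(s ^ 2))
  | 0 => rfl
  | 1 => by
    show x * x + s * 2 = x ^ 2 + 2 * s
    ring
  | (k + 2) => by
    have h1 := lucas_double x s k
    have h2 := lucas_double x s (k + 1)
    have e : 2 * (k + 2) = 2 * k + 4 := by ring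
    have e2 : 2 * (k + 1) = 2 * k + 2 := by ring
    rw [e, lucas_step]
    rw [e2] at h2
    rw [h1, h2]
    rfl

/-- `L_{2k}(1, -x) = L_k(1 - 2x, -x²)` as polynomials in `x` over `ℚ`. -/
theorem stmt5 (k : ℕ) :
    lucas (2 * k) (1 : Polynomial ℚ) (-Polynomial.X) =
      lucas k (1 - 2 * Polynomial.X) (-(Polynomial.X ^ 2)) := by
  have := lucas_double (1 : Polynomial ℚ) (-Polynomial.X) k
  convert this using 2 <;> ring
end

section
/- Let C_{K,n} = (K/(n+K))·binom(2n+K-1, n) for n ≥ 0 and C_{K,n} = 0 for n < 0 (the convolution powers of the Catalan numbers), and define D_{K,M}(N) = det((C_{K,i+j+M})_{i,j=0}^{N-1}) for integers M and positive integers K, N, with D_{K,M}(0) = 1. Then for every natural number m and every positive integer k: (i) D_{2k-1,2-k-m}(N) = 0 for N = 1, 2, …, m+k-2; and (ii) for all natural numbers n, D_{2k-1,2-k-m}(n+m+k-1) = (-1)^{binom(m+k-1,2)} · D_{2k-1,1-k+m}(n). -/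
/-- The convolution powers of the Catalan numbers:
`C_{K,n} = (K/(n+K))·binom(2n+K-1, n)` for `n ≥ 0`, and `C_{K,n} = 0` for `n < 0`. -/
noncomputable def Ccat (K : ℕ) (n : ℤ) : ℚ :=
  if 0 ≤ n then ((K : ℚ) / ((n : ℚ) + (K : ℚ))) * ((2 * n.toNat + K - 1).choose n.toNat)
  else 0

/-- The Hankel determinant `D_{K,M}(N) = det((C_{K,i+j+M}))_{i,j=0}^{N-1}`
(equal to `1` for `N = 0`). -/
noncomputable def Dcat (K : ℕ) (M : ℤ) (N : ℕ) : ℚ :=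
  Matrix.det (Matrix.of fun i j : Fin N => Ccat K ((i : ℤ) + (j : ℤ) + M))

/-!
With `𝒞` the Catalan series, `C_{K,n}` is the coefficient of `X^n` in `𝒞^K`, and `𝒞⁻¹ = 1 - X𝒞`,
whose powers have the coefficients `[X^t] 𝒞^(-K) = -C_{K,t-K}` for `2t > K`. Multiplying the
Hankel matrix `(C_{K,i+j+1-r})` of size `r + n` on the right by the unitriangular Toeplitz matrix
of `𝒞^(-K)` makes it block lower triangular: the first `r` rows become the reversal matrix (of
determinant `(-1)^binom(r,2)`) followed by zeros, and the remaining diagonal block is a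
unitriangular Toeplitz matrix times the Hankel matrix `(-[X^(i+j+r+1)] 𝒞^(-K)) = (C_{K,i+j+r+1-K})`.
With `K = 2k-1` and `r = m+k-1` this is part (ii); part (i) holds because the first row of the
matrix vanishes.
-/

open Finset PowerSeries

lemma Ccat_of_neg (K : ℕ) {n : ℤ} (hn : n < 0) : Ccat K n = 0 := by
  simp [Ccat, not_le.2 hn]

lemma Ccat_natCast (K n : ℕ) :
    Ccat K n = (K / (n + K) : ℚ) * (2 * n + K - 1).choose n := by
  simp [Ccat]

lemma Ccat_zero_left (n : ℤ) : Ccat 0 n = 0 := by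
  unfold Ccat; split_ifs <;> simp

lemma Ccat_zero_right {K : ℕ} (hK : K ≠ 0) : Ccat K 0 = 1 := by
  simpa [hK] using Ccat_natCast K 0

lemma Ccat_one (n : ℕ) : Ccat 1 n = catalan n := by
  have hcat : (n + 1 : ℚ) * catalan n = (2 * n).choose n := by
    exact_mod_cast succ_mul_catalan_eq_centralBinom n
  rw [Ccat_natCast, Nat.add_sub_cancel, ← hcat]
  push_cast
  field_simp

lemma Ccat_add_two_natCast (K n : ℕ) :
    Ccat (K + 2) n = Ccat (K + 1) (n + 1) - Ccat K (n + 1) := by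
  have hpascal : (2 * n + K + 1).choose (n + 1) * (n + 1 : ℚ) =
      (2 * n + K + 1).choose n * (n + K + 1) := by
    have := Nat.choose_succ_right_eq (2 * n + K + 1) n
    rw [show 2 * n + K + 1 - n = n + K + 1 by omega] at this
    exact_mod_cast this
  rw [← Nat.cast_succ, Ccat_natCast, Ccat_natCast, Ccat_natCast,
    show 2 * (n + 1) + (K + 1) - 1 = (2 * n + K + 1) + 1 by omega, Nat.choose_succ_succ',
    show 2 * (n + 1) + K - 1 = 2 * n + K + 1 by omega,
    show 2 * n + (K + 2) - 1 = 2 * n + K + 1 by omega]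
  push_cast
  field_simp
  linear_combination -(n + K + 2 : ℚ) * hpascal

lemma Ccat_add_two {K : ℕ} (hK : K ≠ 0) (n : ℤ) :
    Ccat (K + 2) n = Ccat (K + 1) (n + 1) - Ccat K (n + 1) := by
  obtain hn | rfl | hn := lt_trichotomy n (-1)
  · simp [Ccat_of_neg _ (show n < 0 by omega), Ccat_of_neg _ (show n + 1 < 0 by omega)]
  · simp [Ccat_of_neg _ (show (-1 : ℤ) < 0 by omega), Ccat_zero_right hK,
      Ccat_zero_right K.succ_ne_zero]
  · lift n to ℕ using (by omega)
    exact_mod_cast Ccat_add_two_natCast K n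

local notation "𝒞" => PowerSeries.map (Nat.castRingHom ℚ) PowerSeries.catalanSeries

lemma catalanSeries_eq_one_add_X_mul_sq : 𝒞 = 1 + X * 𝒞 ^ 2 := by
  have h := congrArg (PowerSeries.map (Nat.castRingHom ℚ)) catalanSeries_sq_mul_X_add_one
  simp only [map_add, map_mul, map_pow, map_X, map_one] at h
  linear_combination -h

lemma catalanSeries_mul_one_sub_X_mul : 𝒞 * (1 - X * 𝒞) = 1 := by
  linear_combination catalanSeries_eq_one_add_X_mul_sq

lemma coeff_catalanSeries_pow_add_two (K n : ℕ) :
    coeff n (𝒞 ^ (K + 2)) = coeff (n + 1) (𝒞 ^ (K + 1)) - coeff (n + 1) (𝒞 ^ K) := by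
  have h : 𝒞 ^ (K + 1) = 𝒞 ^ K + X * 𝒞 ^ (K + 2) := by
    linear_combination 𝒞 ^ K * catalanSeries_eq_one_add_X_mul_sq
  rw [h, map_add, coeff_succ_X_mul]
  ring

lemma coeff_catalanSeries (n : ℕ) : coeff n 𝒞 = Ccat 1 n := by
  simp [Ccat_one]

lemma coeff_catalanSeries_pow {K : ℕ} (hK : K ≠ 0) (n : ℕ) : coeff n (𝒞 ^ K) = Ccat K n := by
  obtain ⟨K, rfl⟩ := Nat.exists_eq_add_one_of_ne_zero hK
  clear hK
  induction K using Nat.twoStepInduction generalizing n with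
  | zero => rw [pow_one, coeff_catalanSeries]
  | one =>
    rw [coeff_catalanSeries_pow_add_two, Ccat_add_two_natCast, Ccat_zero_left, pow_one,
      pow_zero, coeff_one, if_neg n.succ_ne_zero, sub_zero, sub_zero, coeff_catalanSeries,
      Nat.cast_succ]
  | more K ih₀ ih₁ =>
    rw [coeff_catalanSeries_pow_add_two, ih₀, ih₁, Ccat_add_two_natCast (K + 1)]
    push_cast
    ring_nf

lemma coeff_succ_one_sub_X_mul_catalanSeries (n : ℕ) :
    coeff (n + 1) (1 - X * 𝒞) = -Ccat 1 n := by
  simp [coeff_one, coeff_succ_X_mul, Ccat_one]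

lemma coeff_one_sub_X_mul_catalanSeries_pow_add_two (K n : ℕ) :
    coeff (n + 1) ((1 - X * 𝒞) ^ (K + 2)) =
      coeff (n + 1) ((1 - X * 𝒞) ^ (K + 1)) - coeff n ((1 - X * 𝒞) ^ K) := by
  have h : (1 - X * 𝒞) ^ (K + 2) = (1 - X * 𝒞) ^ (K + 1) - X * (1 - X * 𝒞) ^ K := by
    linear_combination (-X * (1 - X * 𝒞) ^ K) * catalanSeries_eq_one_add_X_mul_sq
  rw [h, map_sub, coeff_succ_X_mul]

lemma coeff_one_sub_X_mul_catalanSeries_pow {K : ℕ} (hK : K ≠ 0) {n : ℕ} (hn : K + 1 ≤ 2 * n) :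
    coeff n ((1 - X * 𝒞) ^ K) = -Ccat K (n - K) := by
  obtain ⟨K, rfl⟩ := Nat.exists_eq_add_one_of_ne_zero hK
  clear hK
  induction K using Nat.twoStepInduction generalizing n with
  | zero =>
    obtain ⟨n, rfl⟩ := Nat.exists_eq_add_one_of_ne_zero (show n ≠ 0 by omega)
    simp [coeff_succ_one_sub_X_mul_catalanSeries]
  | one =>
    obtain ⟨n, rfl⟩ := Nat.exists_eq_add_one_of_ne_zero (show n ≠ 0 by omega)
    obtain ⟨n, rfl⟩ := Nat.exists_eq_add_one_of_ne_zero (show n ≠ 0 by omega)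
    rw [coeff_one_sub_X_mul_catalanSeries_pow_add_two, pow_one, pow_zero, coeff_one,
      if_neg n.succ_ne_zero, coeff_succ_one_sub_X_mul_catalanSeries,
      show ((n + 1 + 1 : ℕ) : ℤ) - (1 + 1 : ℕ) = n by push_cast; ring, Ccat_add_two_natCast 0,
      Ccat_zero_left]
    push_cast
    ring
  | more K ih₀ ih₁ =>
    obtain ⟨n, rfl⟩ := Nat.exists_eq_add_one_of_ne_zero (show n ≠ 0 by omega)
    have hrec := Ccat_add_two (K := K + 1) (by omega) (n - K - 2)
    rw [coeff_one_sub_X_mul_catalanSeries_pow_add_two, ih₀ (by omega), ih₁ (by omega)]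
    push_cast at hrec ⊢
    ring_nf at hrec ⊢
    linarith

lemma PowerSeries.sum_coeff_add_mul_coeff_sub {R : Type*} [CommRing R] (φ γ : R⟦X⟧) (i j : ℕ) :
    ∑ l ∈ range (j + 1), coeff (i + l) φ * coeff (j - l) γ =
      coeff (i + j) (φ * γ) - ∑ s ∈ range i, coeff s φ * coeff (i + j - s) γ := by
  rw [coeff_mul, Finset.Nat.sum_antidiagonal_eq_sum_range_succ (fun s t => coeff s φ * coeff t γ),
    Nat.succ_eq_add_one, add_assoc, sum_range_add _ i, add_sub_cancel_left]
  exact sum_congr rfl fun l _ => by rw [show i + j - (i + l) = j - l by omega]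

namespace Matrix

variable {R : Type*} [CommRing R]

def hankel (a : ℕ → R) (N : ℕ) : Matrix (Fin N) (Fin N) R :=
  of fun i j => a (i + j)

def upperToeplitz (a : ℕ → R) (N : ℕ) : Matrix (Fin N) (Fin N) R :=
  of fun i j => if i ≤ j then a (j - i) else 0

lemma det_upperToeplitz (a : ℕ → R) (N : ℕ) : (upperToeplitz a N).det = a 0 ^ N := by
  rw [det_of_isUpperTriangular (M := upperToeplitz a N) fun i j hji => if_neg (not_le.2 hji)]
  simp [upperToeplitz]

lemma hankel_mul_upperToeplitz_apply (a b : ℕ → R) {N : ℕ} (i j : Fin N) :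
    (hankel a N * upperToeplitz b N) i j = ∑ l ∈ range (j + 1), a (i + l) * b (j - l) := by
  simp only [mul_apply, hankel, upperToeplitz, of_apply, mul_ite, mul_zero]
  refine (Fin.sum_univ_eq_sum_range (fun l => if l ≤ j then a (i + l) * b (j - l) else 0) N).trans
    ?_
  rw [← sum_filter]
  congr 1
  ext l
  simp only [mem_filter, mem_range]
  omega

lemma upperToeplitz_transpose_mul_hankel_apply (a b : ℕ → R) {n : ℕ} (p q : Fin n) :
    ((upperToeplitz a n)ᵀ * hankel b n) p q = ∑ c ∈ range (p + 1), a (p - c) * b (c + q) := by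
  simp only [mul_apply, hankel, upperToeplitz, transpose_apply, of_apply, ite_mul, zero_mul]
  refine (Fin.sum_univ_eq_sum_range (fun c => if c ≤ p then a (p - c) * b (c + q) else 0) n).trans
    ?_
  rw [← sum_filter]
  congr 1
  ext c
  simp only [mem_filter, mem_range]
  omega

lemma det_hankel_ite_add_one_eq (r : ℕ) :
    (hankel (fun s => if s + 1 = r then (1 : R) else 0) r).det = (-1) ^ r.choose 2 := by
  induction r with
  | zero => simp
  | succ r ih =>
    have hminor : (hankel (fun s => if s + 1 = r + 1 then (1 : R) else 0) (r + 1)).submatrix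
        Fin.succ (Fin.last r).succAbove = hankel (fun s => if s + 1 = r then (1 : R) else 0) r := by
      ext i j
      simp only [submatrix_apply, hankel, of_apply, Fin.succAbove_last, Fin.val_succ,
        Fin.val_castSucc]
      congr 1
      simp only [eq_iff_iff]
      omega
    rw [det_succ_row_zero, sum_eq_single (Fin.last r), hminor, ih, Nat.choose_succ_succ',
      Nat.choose_one_right, pow_add]
    · simp [hankel, mul_comm]
    · intro j _ hj
      have hentry : hankel (fun s => if s + 1 = r + 1 then (1 : R) else 0) (r + 1) 0 j = 0 :=
        if_neg fun h => hj (Fin.ext (by simpa using h))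
      rw [hentry, mul_zero, zero_mul]
    · simp

lemma hankel_coeff_X_pow_mul_mul_upperToeplitz_apply {ψ γ : R⟦X⟧} (hψγ : ψ * γ = 1) (r : ℕ)
    {N : ℕ} (i j : Fin N) :
    (hankel (fun s => coeff (s + 1) (X ^ r * ψ)) N * upperToeplitz (coeff · γ) N :
      Matrix (Fin N) (Fin N) R) i j =
      coeff (i + 1 + j) (X ^ r : R⟦X⟧) -
        ∑ s ∈ range (i + 1), coeff s (X ^ r * ψ) * coeff (i + 1 + j - s) γ := by
  have h := sum_coeff_add_mul_coeff_sub (X ^ r * ψ) γ (i + 1) j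
  rw [mul_assoc, hψγ, mul_one] at h
  rw [hankel_mul_upperToeplitz_apply, ← h]
  exact sum_congr rfl fun l _ => by rw [add_right_comm]

theorem det_hankel_coeff_X_pow_mul {ψ γ : R⟦X⟧} (hψγ : ψ * γ = 1) (hψ : constantCoeff ψ = 1)
    (r n : ℕ) :
    (hankel (fun s => coeff (s + 1) (X ^ r * ψ)) (r + n)).det =
      (-1) ^ r.choose 2 * (hankel (fun s => -coeff (s + r + 1) γ) n).det := by
  set A := hankel (fun s => coeff (s + 1) (X ^ r * ψ)) (r + n)
  set T := upperToeplitz (coeff · γ) (r + n)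
  set M := (A * T).submatrix finSumFinEquiv finSumFinEquiv
  have hAT : ∀ i j, (A * T) i j = _ := hankel_coeff_X_pow_mul_mul_upperToeplitz_apply hψγ r
  have hγ : coeff 0 γ = 1 := by simpa [hψ] using congrArg constantCoeff hψγ
  have hvanish : ∀ i ≤ r, ∀ f : ℕ → R, ∑ s ∈ range i, coeff s (X ^ r * ψ) * f s = 0 :=
    fun i hi f => sum_eq_zero fun s hs => by
      rw [coeff_X_pow_mul', if_neg (not_le.2 ((mem_range.1 hs).trans_le hi)), zero_mul]
  have h₁₁ : M.toBlocks₁₁ = hankel (fun s => if s + 1 = r then 1 else 0) r := by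
    ext i j
    show (A * T) (Fin.castAdd n i) (Fin.castAdd n j) = _
    rw [hAT, Fin.val_castAdd, Fin.val_castAdd, coeff_X_pow, hvanish _ i.2, sub_zero]
    simp only [hankel, of_apply, add_right_comm]
  have h₁₂ : M.toBlocks₁₂ = 0 := by
    ext i q
    show (A * T) (Fin.castAdd n i) (Fin.natAdd r q) = 0
    rw [hAT, Fin.val_castAdd, Fin.val_natAdd, coeff_X_pow, if_neg (by omega), hvanish _ i.2,
      sub_zero]
  have h₂₂ : M.toBlocks₂₂ =
      (upperToeplitz (coeff · ψ) n)ᵀ * hankel (fun s => -coeff (s + r + 1) γ) n := by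
    ext p q
    show (A * T) (Fin.natAdd r p) (Fin.natAdd r q) = _
    rw [hAT, Fin.val_natAdd, Fin.val_natAdd, coeff_X_pow, if_neg (by omega), zero_sub,
      show r + p + 1 = r + (p + 1) by ring, sum_range_add, hvanish r le_rfl, zero_add,
      upperToeplitz_transpose_mul_hankel_apply, ← sum_range_reflect, ← sum_neg_distrib]
    refine sum_congr rfl fun c hc => ?_
    rw [mem_range] at hc
    rw [add_comm r, coeff_X_pow_mul, mul_neg, show p + 1 - 1 - c = p - c by omega,
      show r + (p + 1) + (r + q) - (p - c + r) = c + q + r + 1 by omega]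
  calc A.det = (A * T).det := by rw [det_mul, det_upperToeplitz, hγ, one_pow, mul_one]
    _ = M.det := (det_submatrix_equiv_self _ _).symm
    _ = (fromBlocks M.toBlocks₁₁ 0 M.toBlocks₂₁ M.toBlocks₂₂).det := by
      rw [← h₁₂, fromBlocks_toBlocks]
    _ = _ := by
      rw [det_fromBlocks_zero₁₂, h₁₁, h₂₂, det_mul, det_transpose, det_upperToeplitz,
        det_hankel_ite_add_one_eq, coeff_zero_eq_constantCoeff_apply, hψ, one_pow, one_mul]

end Matrix

open Matrix

lemma Dcat_eq_zero_of_add_nonpos (K : ℕ) {M : ℤ} {N : ℕ} (hN : N ≠ 0) (hNM : N + M ≤ 0) :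
    Dcat K M N = 0 :=
  det_eq_zero_of_row_eq_zero ⟨0, Nat.pos_of_ne_zero hN⟩ fun j =>
    Ccat_of_neg K (by rw [Fin.val_mk, Nat.cast_zero]; omega)

lemma Dcat_eq_det_hankel {K : ℕ} {M : ℤ} {a : ℕ → ℚ} (ha : ∀ s : ℕ, a s = Ccat K (s + M))
    (N : ℕ) : Dcat K M N = (hankel a N).det := by
  simp [Dcat, hankel, ha]

lemma coeff_X_pow_mul_catalanSeries_pow {K : ℕ} (hK : K ≠ 0) (r s : ℕ) :
    coeff s (X ^ r * 𝒞 ^ K) = Ccat K (s - r) := by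
  rw [coeff_X_pow_mul']
  split_ifs with h
  · rw [coeff_catalanSeries_pow hK, Nat.cast_sub h]
  · rw [Ccat_of_neg K (by omega)]

theorem Dcat_one_sub_add {K : ℕ} (hK : K ≠ 0) {r : ℕ} (hKr : K ≤ 2 * r + 1) (n : ℕ) :
    Dcat K (1 - r) (r + n) = (-1) ^ r.choose 2 * Dcat K (r + 1 - K) n := by
  have hinv : 𝒞 ^ K * (1 - X * 𝒞) ^ K = 1 := by
    rw [← mul_pow, catalanSeries_mul_one_sub_X_mul, one_pow]
  have hconst : constantCoeff (𝒞 ^ K) = 1 := by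
    rw [← coeff_zero_eq_constantCoeff_apply, coeff_catalanSeries_pow hK, Nat.cast_zero,
      Ccat_zero_right hK]
  rw [Dcat_eq_det_hankel (a := fun s => coeff (s + 1) (X ^ r * 𝒞 ^ K)) (fun s => ?_),
    Dcat_eq_det_hankel (a := fun s => -coeff (s + r + 1) ((1 - X * 𝒞) ^ K)) (fun s => ?_),
    det_hankel_coeff_X_pow_mul hinv hconst]
  · rw [coeff_one_sub_X_mul_catalanSeries_pow hK (by omega), neg_neg]
    push_cast
    ring_nf
  · rw [coeff_X_pow_mul_catalanSeries_pow hK]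
    push_cast
    ring_nf

/-- Theorem 2: vanishing and quasi-periodicity of the Hankel determinants
`D_{2k-1,2-k-m}` of backwards shifted odd convolution powers of Catalan numbers. -/
theorem stmt7 (m : ℕ) (k : ℕ) (hk : 0 < k) :
    (∀ N : ℕ, 1 ≤ N → N ≤ m + k - 2 →
        Dcat (2 * k - 1) (2 - (k : ℤ) - (m : ℤ)) N = 0) ∧
      (∀ n : ℕ,
        Dcat (2 * k - 1) (2 - (k : ℤ) - (m : ℤ)) (n + m + k - 1) =
          (-1 : ℚ) ^ ((m + k - 1).choose 2) * Dcat (2 * k - 1) (1 - (k : ℤ) + (m : ℤ)) n) := by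
  refine ⟨fun N hN hNmk => Dcat_eq_zero_of_add_nonpos _ (by omega) (by omega), fun n => ?_⟩
  rw [show (2 : ℤ) - k - m = 1 - ((m + k - 1 : ℕ) : ℤ) by omega,
    show (1 : ℤ) - k + m = ((m + k - 1 : ℕ) : ℤ) + 1 - ((2 * k - 1 : ℕ) : ℤ) by omega,
    show n + m + k - 1 = m + k - 1 + n by omega]
  exact Dcat_one_sub_add (by omega) (by omega) n
end

section
/- Let C_{K,n} = (K/(n+K))·binom(2n+K-1, n) for n ≥ 0 and C_{K,n} = 0 for n < 0, and define D_{K,M}(N) = det((C_{K,i+j+M})_{i,j=0}^{N-1}) with D_{K,M}(0) = 1. Then for every positive integer k: D_{2k,1-k}(k·n) = (-1)^{n·binom(k,2)} for all natural numbers n, and D_{2k,1-k}(N) = 0 for every positive integer N not divisible by k. -/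
/-!
Let `Δ f (h) = f (h - 1) + 2 f (h) + f (h + 1)` act on functions `ℤ → ℚ`. By the ballot formula,
`C_{2k, m+1-k} = (Δ^m y)(1)` with `y = δ_k - δ_{-k}`, and summation by parts shows that `Δ` is
symmetric for the pairing `∑_{h ≥ 1} f h * g h` of functions vanishing at `0`, one of them finitely
supported. Hence the Hankel
matrix is the product of the unitriangular matrix `(Δ^i (δ_1 - δ_{-1}))(h + 1)` and of
`(Δ^j y)(h + 1)`. Unitriangular column operations replace `Δ^j` by any monic polynomial of degree
`j` in `Δ`; the Chebyshev polynomials `C_j (Δ - 2)` act as `f ↦ f (· - j) + f (· + j)`, after which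
row `h` has a single `1` in column `|h + 1 - k|` and a single `-1` in column `h + 1 + k`.
If `k ∤ N` this matrix kills the indicator of a residue class modulo `2k`. If `N = k n` it is the
blockwise reversal of `n` blocks of size `k`, of determinant `(-1)^(n·binom(k,2))`, times a lower
and an upper unitriangular matrix.
-/

open Finset Matrix Polynomial

namespace CatalanHankel

variable {R : Type*} [CommRing R]

def intChoose (n : ℕ) (r : ℤ) : R := if 0 ≤ r then (n.choose r.toNat : R) else 0

lemma intChoose_of_neg {n : ℕ} {r : ℤ} (hr : r < 0) : (intChoose n r : R) = 0 :=
  if_neg (by omega)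

@[simp] lemma intChoose_natCast (n m : ℕ) : (intChoose n m : R) = n.choose m := by
  simp [intChoose]

lemma intChoose_of_lt {n : ℕ} {r : ℤ} (hr : n < r) : (intChoose n r : R) = 0 := by
  lift r to ℕ using by omega
  rw [intChoose_natCast, Nat.choose_eq_zero_of_lt (by omega), Nat.cast_zero]

lemma intChoose_zero_left (r : ℤ) : (intChoose 0 r : R) = if r = 0 then 1 else 0 := by
  rcases lt_trichotomy r 0 with hr | rfl | hr
  · rw [intChoose_of_neg hr, if_neg hr.ne]
  · simpa using intChoose_natCast (R := R) 0 0
  · rw [intChoose_of_lt (by simpa using hr), if_neg hr.ne']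

lemma intChoose_succ (n : ℕ) (r : ℤ) :
    (intChoose (n + 1) r : R) = intChoose n r + intChoose n (r - 1) := by
  rcases lt_trichotomy r 0 with hr | rfl | hr
  · simp [intChoose_of_neg, hr, show r - 1 < 0 by omega]
  · simp [intChoose]
  · obtain ⟨t, rfl⟩ : ∃ t : ℕ, r = t + 1 := ⟨r.toNat - 1, by omega⟩
    rw [add_sub_cancel_right, ← Nat.cast_succ, intChoose_natCast, intChoose_natCast,
      intChoose_natCast, Nat.choose_succ_succ', Nat.cast_add, add_comm]

lemma intChoose_add_two (n : ℕ) (r : ℤ) :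
    (intChoose (n + 2) r : R) = intChoose n r + 2 * intChoose n (r - 1) + intChoose n (r - 2) := by
  rw [intChoose_succ, intChoose_succ, intChoose_succ, sub_sub, one_add_one_eq_two]
  ring

lemma intChoose_symm (n : ℕ) (r : ℤ) : (intChoose n (n - r) : R) = intChoose n r := by
  rcases lt_or_ge r 0 with hr | hr
  · rw [intChoose_of_neg hr, intChoose_of_lt (by omega)]
  rcases lt_or_ge (n : ℤ) r with hrn | hrn
  · rw [intChoose_of_lt hrn, intChoose_of_neg (by omega)]
  lift r to ℕ using hr
  rw [← Nat.cast_sub (by omega), intChoose_natCast, intChoose_natCast, Nat.choose_symm (by omega)]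

lemma Ccat_natCast {K : ℕ} (hK : 0 < K) (n : ℕ) :
    Ccat K n = intChoose (2 * n + K - 1) n - intChoose (2 * n + K - 1) ((n : ℤ) - 1) := by
  have hpos : (0 : ℚ) < n + K := by positivity
  rw [Ccat, if_pos (Nat.cast_nonneg n), Int.toNat_natCast, Int.cast_natCast, intChoose_natCast,
    div_mul_eq_mul_div, div_eq_iff hpos.ne']
  rcases n with _ | t
  · simp [intChoose_of_neg]
  · push_cast
    rw [add_sub_cancel_right, intChoose_natCast]
    have h := Nat.choose_succ_right_eq (2 * (t + 1) + K - 1) t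
    rw [show 2 * (t + 1) + K - 1 - t = t + K + 1 by omega] at h
    have h' : ((2 * (t + 1) + K - 1).choose (t + 1) : ℚ) * (t + 1)
        = (2 * (t + 1) + K - 1).choose t * (t + K + 1) := by exact_mod_cast h
    linear_combination -h'

def adjacency : Module.End R (ℤ → R) where
  toFun f h := f (h - 1) + f (h + 1)
  map_add' f g := by ext; simp only [Pi.add_apply]; ring
  map_smul' c f := by ext; simp only [Pi.smul_apply, smul_eq_mul, RingHom.id_apply]; ring

@[simp] lemma adjacency_apply (f : ℤ → R) (h : ℤ) : adjacency f h = f (h - 1) + f (h + 1) := rfl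

def twoStep : Module.End R (ℤ → R) := adjacency + 2

@[simp] lemma twoStep_apply (f : ℤ → R) (h : ℤ) :
    twoStep f h = f (h - 1) + 2 * f h + f (h + 1) := by
  simp [twoStep]; ring

def oddDelta (r : ℤ) : ℤ → R := Pi.single r 1 - Pi.single (-r) 1

lemma oddDelta_apply (r h : ℤ) :
    (oddDelta r : ℤ → R) h = (if h = r then 1 else 0) - (if h = -r then 1 else 0) := by
  simp [oddDelta, Pi.single_apply]

lemma twoStep_pow_single_apply (j : ℕ) (r h : ℤ) :
    (twoStep ^ j) (Pi.single r (1 : R)) h = intChoose (2 * j) (j + h - r) := by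
  induction j generalizing h with
  | zero => simp [intChoose_zero_left, Pi.single_apply, sub_eq_zero]
  | succ j ih =>
    rw [pow_succ', Module.End.mul_apply, twoStep_apply, ih, ih, ih,
      show 2 * (j + 1) = 2 * j + 2 by ring, intChoose_add_two]
    push_cast
    ring_nf

lemma twoStep_pow_oddDelta_apply (j : ℕ) (r h : ℤ) :
    (twoStep ^ j) (oddDelta r : ℤ → R) h =
      intChoose (2 * j) (j + h - r) - intChoose (2 * j) (j + h + r) := by
  simp [oddDelta, map_sub, twoStep_pow_single_apply]

lemma twoStep_pow_oddDelta_zero (j : ℕ) (r : ℤ) : (twoStep ^ j) (oddDelta r : ℤ → R) 0 = 0 := by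
  rw [twoStep_pow_oddDelta_apply, sub_eq_zero, ← intChoose_symm]
  push_cast
  ring_nf

lemma sum_twoStep_mul_comm {f g : ℤ → R} (hf : f 0 = 0) (hg : g 0 = 0) {L : ℕ}
    (hL : ∀ h : ℤ, L ≤ h → f h = 0) :
    ∑ h ∈ range L, twoStep f (h + 1) * g (h + 1) =
      ∑ h ∈ range L, f (h + 1) * twoStep g (h + 1) := by
  set F : ℕ → R := fun h => f h * g (h + 1) - f (h + 1) * g h
  have hstep : ∀ h : ℕ, twoStep f (h + 1) * g (h + 1) - f (h + 1) * twoStep g (h + 1)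
      = -(F (h + 1) - F h) := by
    intro h
    simp only [F, twoStep_apply, Nat.cast_succ]
    ring_nf
  rw [← sub_eq_zero, ← sum_sub_distrib, sum_congr rfl fun h _ => hstep h, sum_neg_distrib,
    sum_range_sub]
  simp [F, hf, hg, hL L le_rfl, hL (L + 1) (by omega)]

lemma twoStep_pow_oddDelta_one_of_lt {i : ℕ} {h : ℤ} (hh : (i : ℤ) + 1 < h) :
    (twoStep ^ i) (oddDelta 1 : ℤ → R) h = 0 := by
  rw [twoStep_pow_oddDelta_apply, intChoose_of_lt (by push_cast; omega),
    intChoose_of_lt (by push_cast; omega), sub_zero]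

lemma twoStep_pow_oddDelta_one_self (i : ℕ) : (twoStep ^ i) (oddDelta 1 : ℤ → R) (i + 1) = 1 := by
  rw [twoStep_pow_oddDelta_apply,
    intChoose_of_lt (r := (i : ℤ) + (i + 1) + 1) (by push_cast; omega),
    show (i : ℤ) + (i + 1) - 1 = (2 * i : ℕ) by push_cast; ring, intChoose_natCast,
    Nat.choose_self, Nat.cast_one, sub_zero]

lemma sum_twoStep_pow_oddDelta_one_mul (r : ℤ) : ∀ {i L : ℕ} (j : ℕ), i < L →
    ∑ h ∈ range L, (twoStep ^ i) (oddDelta 1 : ℤ → R) (h + 1) * (twoStep ^ j) (oddDelta r) (h + 1)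
      = (twoStep ^ (i + j)) (oddDelta r : ℤ → R) 1
  | 0, L, j, hL => by
    rw [sum_eq_single_of_mem 0 (mem_range.2 hL) fun h _ h0 => ?_]
    · simp [oddDelta_apply]
    · simp [oddDelta_apply, h0]
      omega
  | i + 1, L, j, hL => by
    simp only [pow_succ' twoStep i, Module.End.mul_apply]
    rw [sum_twoStep_mul_comm (twoStep_pow_oddDelta_zero i 1) (twoStep_pow_oddDelta_zero j r)
      fun h hh => twoStep_pow_oddDelta_one_of_lt (by omega)]
    simp only [← Module.End.mul_apply, ← pow_succ']
    rw [sum_twoStep_pow_oddDelta_one_mul r (j + 1) (by omega), add_assoc, add_comm 1 j]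

lemma Ccat_two_mul {k : ℕ} (hk : 0 < k) (m : ℕ) :
    Ccat (2 * k) ((m : ℤ) + 1 - k) = (twoStep ^ m) (oddDelta (k : ℤ) : ℤ → ℚ) 1 := by
  rw [twoStep_pow_oddDelta_apply]
  rcases lt_or_ge ((m : ℤ) + 1) k with hmk | hmk
  · rw [Ccat, if_neg (by omega), intChoose_of_neg (by omega),
      intChoose_of_lt (by push_cast; omega), sub_zero]
  obtain ⟨n, hn⟩ : ∃ n : ℕ, (m : ℤ) + 1 - k = n := ⟨((m : ℤ) + 1 - k).toNat, by omega⟩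
  rw [hn, Ccat_natCast (by omega), show 2 * n + 2 * k - 1 = 2 * m + 1 by omega, intChoose_succ,
    intChoose_succ, ← intChoose_symm (2 * m) ((m : ℤ) + 1 + k),
    show ((2 * m : ℕ) : ℤ) - ((m : ℤ) + 1 + k) = n - 1 - 1 by push_cast; omega]
  ring

lemma Dcat_two_mul_eq_det {k : ℕ} (hk : 0 < k) (N : ℕ) :
    Dcat (2 * k) (1 - k) N =
      det (of fun h j : Fin N => (twoStep ^ (j : ℕ)) (oddDelta (k : ℤ) : ℤ → ℚ) (h + 1)) := by
  have hfac : (of fun i j : Fin N => Ccat (2 * k) ((i : ℤ) + j + (1 - k))) =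
      (of fun i h : Fin N => (twoStep ^ (i : ℕ)) (oddDelta 1 : ℤ → ℚ) (h + 1)) *
        of fun h j : Fin N => (twoStep ^ (j : ℕ)) (oddDelta (k : ℤ) : ℤ → ℚ) (h + 1) := by
    ext i j
    rw [mul_apply, of_apply,
      show (i : ℤ) + j + (1 - k) = ((i + j : ℕ) : ℤ) + 1 - k by push_cast; ring,
      Ccat_two_mul hk, ← sum_twoStep_pow_oddDelta_one_mul _ _ i.isLt]
    exact (Fin.sum_univ_eq_sum_range (fun h : ℕ => (twoStep ^ (i : ℕ)) (oddDelta 1 : ℤ → ℚ) (h + 1)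
      * (twoStep ^ (j : ℕ)) (oddDelta (k : ℤ) : ℤ → ℚ) (h + 1)) N).symm
  rw [Dcat, hfac, det_mul, det_of_isLowerTriangular _ fun i h hih => ?_,
    prod_eq_one fun i _ => ?_, one_mul]
  · exact twoStep_pow_oddDelta_one_self (i : ℕ)
  · have : (i : ℕ) < h := hih
    exact twoStep_pow_oddDelta_one_of_lt (by omega)

theorem det_aeval_monic_eq_det_pow {M : Type*} [AddCommGroup M] [Module R M] {N : ℕ}
    (A : Module.End R M) (v : M) (ℓ : Fin N → M →ₗ[R] R) {p : ℕ → R[X]}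
    (hp : ∀ s, (p s).Monic) (hdeg : ∀ s, (p s).natDegree = s) :
    det (of fun h s : Fin N => ℓ h (aeval A (p s) v)) =
      det (of fun h s : Fin N => ℓ h ((A ^ (s : ℕ)) v)) := by
  have hfac : (of fun h s : Fin N => ℓ h (aeval A (p s) v)) =
      (of fun h i : Fin N => ℓ h ((A ^ (i : ℕ)) v)) * of fun i s : Fin N => (p s).coeff i := by
    ext h s
    rw [mul_apply, of_apply, aeval_eq_sum_range' (n := N) (by rw [hdeg]; exact s.isLt)]
    simp only [LinearMap.coe_sum, LinearMap.coe_smul, Finset.sum_apply, Pi.smul_apply, map_sum,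
      map_smul, smul_eq_mul, of_apply]
    rw [← Fin.sum_univ_eq_sum_range (fun i => (p s).coeff i * ℓ h ((A ^ i) v)) N]
    exact sum_congr rfl fun i _ => mul_comm _ _
  rw [hfac, det_mul, det_of_isUpperTriangular (M := of fun i s : Fin N => (p s).coeff i)
    fun i s hsi => coeff_eq_zero_of_natDegree_lt (by rw [hdeg]; exact hsi),
    prod_eq_one fun s _ => ?_, mul_one]
  simpa [hdeg] using (hp s).coeff_natDegree

lemma aeval_adjacency_chebyshevC_apply : ∀ (s : ℕ) (f : ℤ → R) (h : ℤ),
    aeval adjacency (Chebyshev.C R s) f h = f (h - s) + f (h + s)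
  | 0, f, h => by simp [map_ofNat, two_mul]
  | 1, f, h => by simp
  | s + 2, f, h => by
    rw [show ((s + 2 : ℕ) : ℤ) = s + 2 by push_cast; ring, Chebyshev.C_add_two, ← Nat.cast_succ]
    simp only [map_sub, map_mul, aeval_X, Module.End.mul_apply, LinearMap.sub_apply, Pi.sub_apply,
      adjacency_apply, aeval_adjacency_chebyshevC_apply (s + 1), aeval_adjacency_chebyshevC_apply s]
    push_cast
    ring_nf

lemma monic_chebyshevC_add_two_natDegree [IsDomain R] {n : ℕ}
    (h₁ : (Chebyshev.C R (n + 1)).Monic ∧ (Chebyshev.C R (n + 1)).natDegree = n + 1)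
    (h₀ : (Chebyshev.C R n).natDegree ≤ n) :
    (Chebyshev.C R (n + 2)).Monic ∧ (Chebyshev.C R (n + 2)).natDegree = n + 2 := by
  have hX : (X * Chebyshev.C R (n + 1)).natDegree = n + 2 := by
    rw [natDegree_X_mul h₁.1.ne_zero, h₁.2]
  have hlt : (Chebyshev.C R n).natDegree < (X * Chebyshev.C R (n + 1)).natDegree := by omega
  rw [Chebyshev.C_add_two]
  exact ⟨(monic_X.mul h₁.1).sub_of_left (degree_lt_degree hlt),
    by rw [natDegree_sub_eq_left_of_natDegree_lt hlt, hX]⟩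

lemma monic_chebyshevC_natDegree [IsDomain R] :
    ∀ n : ℕ, (Chebyshev.C R (n + 1)).Monic ∧ (Chebyshev.C R (n + 1)).natDegree = n + 1
  | 0 => by simp [monic_X]
  | 1 => by
    simpa [one_add_one_eq_two] using
      monic_chebyshevC_add_two_natDegree (R := R) (n := 0) (by simp [monic_X]) (by simp)
  | n + 2 => by
    have h := monic_chebyshevC_add_two_natDegree (monic_chebyshevC_natDegree (n + 1))
      (monic_chebyshevC_natDegree n).2.le
    push_cast at h ⊢
    rwa [show (n : ℤ) + 2 + 1 = n + 1 + 2 by ring, show n + 2 + 1 = n + 1 + 2 by ring]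

/-- `C_0 = 2` is replaced by `1` to keep the family monic. -/
noncomputable def shiftedC (s : ℕ) : R[X] :=
  if s = 0 then 1 else (Chebyshev.C R s).comp (X - C 2)

lemma monic_shiftedC_natDegree [IsDomain R] (s : ℕ) :
    (shiftedC s : R[X]).Monic ∧ (shiftedC s : R[X]).natDegree = s := by
  rcases s with _ | s
  · simp [shiftedC]
  obtain ⟨hmon, hdeg⟩ := monic_chebyshevC_natDegree (R := R) s
  simp only [shiftedC, Nat.add_one_ne_zero, if_false, Nat.cast_succ]
  exact ⟨hmon.comp (monic_X_sub_C 2) (by simp),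
    by rw [natDegree_comp, hdeg, natDegree_X_sub_C, mul_one]⟩

lemma aeval_twoStep_shiftedC_apply (s : ℕ) (f : ℤ → R) (h : ℤ) :
    aeval (twoStep : Module.End R (ℤ → R)) (shiftedC s : R[X]) f h =
      if s = 0 then f h else f (h - s) + f (h + s) := by
  split_ifs with hs
  · simp [shiftedC, hs]
  · rw [shiftedC, if_neg hs, aeval_comp, map_sub, aeval_X, aeval_C, map_ofNat, twoStep,
      add_sub_cancel_right, aeval_adjacency_chebyshevC_apply]

def reducedEntry (k h s : ℕ) : ℚ :=
  (if s = (h + 1).dist k then 1 else 0) - (if s = h + 1 + k then 1 else 0)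

lemma aeval_twoStep_shiftedC_oddDelta (k h s : ℕ) :
    aeval (twoStep : Module.End ℚ (ℤ → ℚ)) (shiftedC s : ℚ[X]) (oddDelta (k : ℤ)) ((h : ℤ) + 1) =
      reducedEntry k h s := by
  rw [aeval_twoStep_shiftedC_apply]
  simp only [oddDelta_apply, reducedEntry]
  split_ifs <;> simp only [Nat.dist] at * <;> first | omega | norm_num

lemma Dcat_two_mul_eq_det_reducedEntry {k : ℕ} (hk : 0 < k) (N : ℕ) :
    Dcat (2 * k) (1 - k) N = det (of fun h s : Fin N => reducedEntry k h s) := by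
  rw [Dcat_two_mul_eq_det hk]
  refine (det_aeval_monic_eq_det_pow twoStep (oddDelta (k : ℤ))
    (fun h : Fin N => LinearMap.proj (R := ℚ) (φ := fun _ : ℤ => ℚ) ((h : ℤ) + 1))
    (fun s => (monic_shiftedC_natDegree s).1)
    (fun s => (monic_shiftedC_natDegree s).2)).symm.trans ?_
  congr 1
  ext h s
  exact aeval_twoStep_shiftedC_oddDelta k h s

lemma reducedEntry_mulVec (k N : ℕ) (v : ℕ → ℚ) (h : Fin N) :
    ((of fun h s : Fin N => reducedEntry k h s) *ᵥ fun s => v s) h =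
      (if ((h : ℕ) + 1).dist k < N then v (((h : ℕ) + 1).dist k) else 0) -
        (if (h : ℕ) + 1 + k < N then v (h + 1 + k) else 0) := by
  simp only [mulVec, dotProduct, of_apply, reducedEntry, sub_mul, sum_sub_distrib, ite_mul,
    one_mul, zero_mul]
  rw [Fin.sum_univ_eq_sum_range (fun s => if s = ((h : ℕ) + 1).dist k then v s else 0),
    Fin.sum_univ_eq_sum_range (fun s => if s = (h : ℕ) + 1 + k then v s else 0), sum_ite_eq',
    sum_ite_eq']
  simp only [mem_range]

lemma det_reducedEntry_eq_zero {k : ℕ} (hk : 0 < k) {N : ℕ} (hN : ¬ k ∣ N) :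
    det (of fun h s : Fin N => reducedEntry k h s) = 0 := by
  obtain ⟨m, r, hr, hrk, hNm⟩ : ∃ m r, 0 < r ∧ r < k ∧ k * m + r = N :=
    ⟨N / k, N % k, Nat.pos_of_ne_zero fun h => hN (Nat.dvd_of_mod_eq_zero h), Nat.mod_lt N hk,
      Nat.div_add_mod N k⟩
  obtain ⟨p, e, he, rfl⟩ : ∃ p e, e < 2 ∧ 2 * p + e = m :=
    ⟨m / 2, m % 2, Nat.mod_lt m two_pos, Nat.div_add_mod m 2⟩
  have hkm : k * (2 * p + e) = 2 * (k * p) + k * e := by ring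
  have hke : k * e = 0 ∨ k * e = k := by interval_cases e <;> simp
  have hke_lt : k * e < N := by
    rcases hke with h0 | h0
    · omega
    · have : 1 ≤ 2 * p + e := by
        by_contra h'
        obtain rfl : e = 0 := by omega
        omega
      have := Nat.le_mul_of_pos_right k this
      omega
  -- For `a ≥ k`, row `a - 1` pairs the columns `a - k` and `a + k`, of the same class modulo `2k`;
  -- the class of `k * (N / k)` misses the columns `k - a` for `a < k`, and every column `a - k`
  -- whose partner `a + k ≥ N` is cut off.
  let v : ℕ → ℚ := fun s => if s % (2 * k) = k * e then 1 else 0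
  refine exists_mulVec_eq_zero_iff.mp ⟨fun s => v s, fun h0 => ?_, funext fun h => ?_⟩
  · have := congr_fun h0 ⟨k * e, hke_lt⟩
    simp [v, Nat.mod_eq_of_lt (show k * e < 2 * k by omega)] at this
  rw [reducedEntry_mulVec, Pi.zero_apply, sub_eq_zero]
  have hh := h.isLt
  generalize ha : (h : ℕ) + 1 = a at *
  rcases lt_or_ge a k with hlt | hge
  · have hv₁ : v (k - a) = 0 := by
      refine if_neg ?_
      rw [Nat.mod_eq_of_lt (by omega)]
      omega
    have hv₂ : v (a + k) = 0 := by
      refine if_neg ?_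
      rw [Nat.mod_eq_of_lt (by omega)]
      omega
    rw [Nat.dist_eq_sub_of_le hlt.le, hv₁, hv₂, ite_self, ite_self]
  rw [Nat.dist_eq_sub_of_le_right hge, if_pos (by omega)]
  have hv : v (a + k) = v (a - k) := by
    simp only [v, show a + k = a - k + 2 * k by omega, Nat.add_mod_right]
  split_ifs with hN'
  · exact hv.symm
  refine if_neg fun hmod => ?_
  have hdiv := Nat.div_add_mod (a - k) (2 * k)
  rw [hmod] at hdiv
  set q := (a - k) / (2 * k)
  have hq : 2 * k * q = 2 * (k * q) := by ring
  have h₁ : q < p := Nat.lt_of_mul_lt_mul_left (a := k) (by omega)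
  have h₂ : p < q + 1 := Nat.lt_of_mul_lt_mul_left (a := k) (by rw [Nat.mul_add_one]; omega)
  omega

def revMatrix (k : ℕ) : Matrix (Fin k) (Fin k) R :=
  of fun u v => if (u : ℕ) + v + 1 = k then 1 else 0

lemma det_revMatrix : ∀ k : ℕ, det (revMatrix k : Matrix (Fin k) (Fin k) R) = (-1) ^ k.choose 2
  | 0 => by simp
  | k + 1 => by
    rw [det_succ_column_zero, sum_eq_single (Fin.last k) (fun i _ hi => ?_) (by simp)]
    · have hminor : (revMatrix (k + 1) : Matrix _ _ R).submatrix (Fin.last k).succAbove Fin.succ =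
          revMatrix k := by
        ext t u
        simp only [revMatrix, submatrix_apply, of_apply, Fin.succAbove_last, Fin.val_castSucc,
          Fin.val_succ]
        exact if_congr (by omega) rfl rfl
      rw [hminor, det_revMatrix k, Nat.choose_succ_succ', Nat.choose_one_right, pow_add]
      simp [revMatrix]
    · have : (i : ℕ) ≠ k := fun h => hi (Fin.ext h)
      simp [revMatrix, this]

def blockEquiv (k n : ℕ) : Fin k × Fin n ≃ Fin (k * n) :=
  (Equiv.prodComm _ _).trans (finProdFinEquiv.trans (finCongr (Nat.mul_comm n k)))

@[simp] lemma blockEquiv_apply_val {k n : ℕ} (u : Fin k) (c : Fin n) :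
    (blockEquiv k n (u, c) : ℕ) = u + k * c := rfl

def blockRev (k n : ℕ) : Matrix (Fin (k * n)) (Fin (k * n)) R :=
  reindex (blockEquiv k n) (blockEquiv k n) (blockDiagonal fun _ => revMatrix k)

lemma det_blockRev (k n : ℕ) : det (blockRev k n : Matrix _ _ R) = (-1) ^ (n * k.choose 2) := by
  rw [blockRev, det_reindex_self, det_blockDiagonal, prod_const, det_revMatrix, card_univ,
    Fintype.card_fin, ← pow_mul, mul_comm]

lemma blockRev_mul_apply {k n : ℕ} (M : Matrix (Fin (k * n)) (Fin (k * n)) R) (u : Fin k)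
    (c : Fin n) (s : Fin (k * n)) :
    (blockRev k n * M : Matrix _ _ R) (blockEquiv k n (u, c)) s =
      M (blockEquiv k n (u.rev, c)) s := by
  rw [mul_apply, ← (blockEquiv k n).sum_comp, Fintype.sum_prod_type]
  simp only [blockRev, reindex_apply, submatrix_apply, Equiv.symm_apply_apply, blockDiagonal_apply,
    ite_mul, zero_mul]
  rw [sum_comm, sum_eq_single c (fun c' _ hc' => sum_eq_zero fun v _ => if_neg (Ne.symm hc'))
    (by simp), sum_eq_single u.rev (fun v _ hv => ?_) (by simp)]
  · simp [revMatrix, Fin.val_rev]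
    omega
  · simp only [revMatrix, of_apply, if_true]
    rw [if_neg, zero_mul]
    intro h
    exact hv (Fin.ext (by rw [Fin.val_rev]; omega))

lemma mul_add_div_mod_of_lt {k c u : ℕ} (hu : u < k) :
    (k * c + u) / k = c ∧ (k * c + u) % k = u :=
  (Nat.div_mod_unique (by omega)).2 ⟨by ring, hu⟩

/- With `ρ` the reflection of each block `[k c, k c + k)`, row `i` of `upperEntry` is
`e_i - e_(ρ i + k + 1)`, and row `g` of `lowerEntry` is `e_g + e_(ρ g + 1 - k)`, the second term
being present only when `g` is neither in the first block nor first in its block. -/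

def upperEntry (k i s : ℕ) : ℚ :=
  (if s = i then 1 else 0) - (if s = k * (i / k) + 2 * k - i % k then 1 else 0)

def lowerEntry (k g i : ℕ) : ℚ :=
  (if i = g then 1 else 0) + (if k ≤ g ∧ 0 < g % k ∧ i = k * (g / k) - g % k then 1 else 0)

lemma det_upperEntry {k : ℕ} (hk : 0 < k) (N : ℕ) :
    det (of fun i s : Fin N => upperEntry k i s) = 1 := by
  refine (det_of_isUpperTriangular fun i s hsi => ?_).trans (prod_eq_one fun i _ => ?_)
  · have := Nat.div_add_mod (i : ℕ) k
    have := Nat.mod_lt (i : ℕ) hk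
    have : (s : ℕ) < i := hsi
    simp only [of_apply, upperEntry]
    rw [if_neg (by omega), if_neg (by omega), sub_zero]
  · have := Nat.div_add_mod (i : ℕ) k
    have := Nat.mod_lt (i : ℕ) hk
    simp only [of_apply, upperEntry]
    rw [if_pos trivial, if_neg (by omega), sub_zero]

lemma det_lowerEntry (k N : ℕ) : det (of fun g i : Fin N => lowerEntry k g i) = 1 := by
  refine (det_of_isLowerTriangular _ fun g i hgi => ?_).trans (prod_eq_one fun g _ => ?_)
  · have := Nat.div_add_mod (g : ℕ) k
    have : (g : ℕ) < i := hgi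
    simp only [of_apply, lowerEntry]
    rw [if_neg (by omega), if_neg (by omega), add_zero]
  · have := Nat.div_add_mod (g : ℕ) k
    simp only [of_apply, lowerEntry]
    rw [if_pos trivial, if_neg (by omega), add_zero]

lemma sum_lowerEntry_mul_upperEntry (k : ℕ) {N g : ℕ} (hg : g < N) (s : ℕ) :
    ∑ i ∈ range N, lowerEntry k g i * upperEntry k i s =
      upperEntry k g s + if k ≤ g ∧ 0 < g % k then upperEntry k (k * (g / k) - g % k) s else 0 := by
  have := Nat.div_add_mod g k
  simp only [lowerEntry, ← and_assoc, add_mul, sum_add_distrib, ite_mul, one_mul, zero_mul,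
    sum_ite_eq', mem_range, if_pos hg]
  by_cases hc : k ≤ g ∧ 0 < g % k
  · simp only [hc, true_and, sum_ite_eq', mem_range, if_true,
      if_pos (show k * (g / k) - g % k < N by omega)]
  · simp only [hc, false_and, if_false, sum_const_zero]

lemma reducedEntry_eq_sum_lowerEntry_mul {k u c N : ℕ} (hu : u < k)
    (hN : k - 1 - u + k * c < N) (s : ℕ) :
    reducedEntry k (u + k * c) s =
      ∑ i ∈ range N, lowerEntry k (k - 1 - u + k * c) i * upperEntry k i s := by
  rw [sum_lowerEntry_mul_upperEntry k hN, show k - 1 - u + k * c = k * c + (k - 1 - u) by ring]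
  obtain ⟨hdiv, hmod⟩ := mul_add_div_mod_of_lt (c := c) (show k - 1 - u < k by omega)
  simp only [hdiv, hmod]
  rcases c with _ | c
  · rw [if_neg (show ¬(k ≤ k * 0 + (k - 1 - u) ∧ 0 < k - 1 - u) by omega), add_zero]
    simp only [reducedEntry, upperEntry, hdiv, hmod,
      Nat.dist_eq_sub_of_le (show u + k * 0 + 1 ≤ k by omega)]
    congr 1 <;> exact if_congr (by omega) rfl rfl
  simp only [reducedEntry, upperEntry, hdiv, hmod,
    Nat.dist_eq_sub_of_le_right (show k ≤ u + k * (c + 1) + 1 by rw [Nat.mul_add_one]; omega)]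
  by_cases hu' : u + 1 < k
  · rw [if_pos (show k ≤ k * (c + 1) + (k - 1 - u) ∧ 0 < k - 1 - u by
        rw [Nat.mul_add_one]; omega),
      show k * (c + 1) - (k - 1 - u) = k * c + (u + 1) by rw [Nat.mul_add_one]; omega]
    obtain ⟨hdiv', hmod'⟩ := mul_add_div_mod_of_lt (c := c) hu'
    simp only [hdiv', hmod', Nat.mul_add_one]
    split_ifs <;> first | omega | norm_num
  · rw [if_neg (show ¬(k ≤ k * (c + 1) + (k - 1 - u) ∧ 0 < k - 1 - u) by omega), add_zero]
    simp only [Nat.mul_add_one]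
    congr 1 <;> exact if_congr (by omega) rfl rfl

lemma det_reducedEntry_mul {k : ℕ} (hk : 0 < k) (n : ℕ) :
    det (of fun h s : Fin (k * n) => reducedEntry k h s) = (-1) ^ (n * k.choose 2) := by
  have hfac : (of fun h s : Fin (k * n) => reducedEntry k h s) = blockRev k n *
      ((of fun g i : Fin (k * n) => lowerEntry k g i) *
        of fun i s : Fin (k * n) => upperEntry k i s) := by
    ext g s
    obtain ⟨⟨u, c⟩, rfl⟩ := (blockEquiv k n).surjective g
    have hbound := (blockEquiv k n (u.rev, c)).isLt
    rw [blockRev_mul_apply, mul_apply, of_apply]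
    simp only [of_apply]
    rw [Fin.sum_univ_eq_sum_range
      (fun i => lowerEntry k (blockEquiv k n (u.rev, c)) i * upperEntry k i s)]
    simp only [blockEquiv_apply_val, Fin.val_rev] at hbound ⊢
    rw [show k - (u + 1) = k - 1 - u by omega] at hbound ⊢
    exact reducedEntry_eq_sum_lowerEntry_mul u.isLt hbound s
  rw [hfac, det_mul, det_mul, det_blockRev, det_lowerEntry, det_upperEntry hk, mul_one, mul_one]

end CatalanHankel

/-- `D_{2k,1-k}(kn) = (-1)^{n·binom(k,2)}` and `D_{2k,1-k}(N) = 0` when `k ∤ N`. -/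
theorem stmt8 (k : ℕ) (hk : 0 < k) :
    (∀ n : ℕ, Dcat (2 * k) (1 - (k : ℤ)) (k * n) = (-1 : ℚ) ^ (n * k.choose 2)) ∧
      (∀ N : ℕ, 0 < N → ¬ k ∣ N → Dcat (2 * k) (1 - (k : ℤ)) N = 0) := by
  refine ⟨fun n => ?_, fun N _ hN => ?_⟩
  · rw [CatalanHankel.Dcat_two_mul_eq_det_reducedEntry hk, CatalanHankel.det_reducedEntry_mul hk]
  · rw [CatalanHankel.Dcat_two_mul_eq_det_reducedEntry hk,
      CatalanHankel.det_reducedEntry_eq_zero hk hN]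
end

section
/- Let C_n(t) be the Narayana polynomials, C_0(t) = 1 and C_n(t) = Σ_{k=0}^{n-1} (1/(k+1))·binom(n,k)·binom(n-1,k)·t^k for n > 0, and let c_0(x,t) = Σ_{n≥0} C_n(t)·x^n and c_1(x,t) = 1 + t·Σ_{n≥1} C_n(t)·x^n, formal power series in x over the polynomial ring ℚ[t]. Then c_1(x,t) = 1 + x·t·c_0(x,t)·c_1(x,t) and c_0(x,t) = 1 + x·c_0(x,t)·c_1(x,t). -/
/-!
The Narayana polynomials satisfy the three-term recurrence
`(n + 3) C_{n+2} = (2n + 3)(1 + t) C_{n+1} - n (1 - t)² C_n`, a binomial identity coefficientwise;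
equivalently, `c₀` satisfies a linear first-order differential equation in `x`. Since
`c₁ = 1 + t (c₀ - 1)`, both functional equations say that the defect `y = c₀ - 1 - x c₀ c₁`,
a quadratic expression in `c₀`, vanishes. The differential equation for `c₀` makes `y` a solution of
`(x y)' = x (p · x y' + q · y)`, and comparing coefficients shows that `0` is the only power series
solving such an equation.
-/

/-- The Narayana polynomials: `C₀(t) = 1` and
`Cₙ(t) = Σ_{k=0}^{n-1} (1/(k+1))·binom(n,k)·binom(n-1,k)·t^k` for `n > 0`. -/
noncomputable def narayana (n : ℕ) : Polynomial ℚ :=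
  if n = 0 then 1
  else ∑ k ∈ Finset.range n,
    Polynomial.C ((1 / (k + 1 : ℚ)) * (n.choose k) * ((n - 1).choose k)) * Polynomial.X ^ k

/-- The generating function `c₀(x,t) = Σ_{n≥0} Cₙ(t)·xⁿ` of the Narayana polynomials,
a formal power series in `x` over `ℚ[t]`. -/
noncomputable def narGF0 : PowerSeries (Polynomial ℚ) := PowerSeries.mk narayana

/-- The generating function `c₁(x,t) = 1 + t·Σ_{n≥1} Cₙ(t)·xⁿ`,
a formal power series in `x` over `ℚ[t]`. -/
noncomputable def narGF1 : PowerSeries (Polynomial ℚ) :=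
  PowerSeries.mk fun n => if n = 0 then 1 else Polynomial.X * narayana n

open Finset Finset.HasAntidiagonal PowerSeries
open scoped Polynomial

namespace Nat

variable {K : Type*} [Field K] [CharZero K]

theorem cast_choose_succ_succ (a b : ℕ) :
    ((a + 1).choose (b + 1) : K) = (a + 1) * a.choose b / (b + 1) := by
  rw [eq_div_iff (Nat.cast_add_one_ne_zero b)]
  exact_mod_cast (Nat.add_one_mul_choose_eq a b).symm

theorem cast_choose_succ_right (a b : ℕ) :
    (a.choose (b + 1) : K) = (a - b) * a.choose b / (b + 1) := by
  rw [eq_div_iff (Nat.cast_add_one_ne_zero b)]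
  rcases le_or_gt b a with hba | hab
  · rw [← Nat.cast_sub hba]
    exact_mod_cast (Nat.choose_succ_right_eq a b).trans (mul_comm _ _)
  · simp [Nat.choose_eq_zero_of_lt hab, Nat.choose_eq_zero_of_lt (hab.trans (Nat.lt_succ_self b))]

end Nat

noncomputable def narayanaCoeff (n k : ℕ) : ℚ := (1 / (k + 1 : ℚ)) * n.choose k * (n - 1).choose k

theorem coeff_narayana (n k : ℕ) : (narayana n).coeff k = narayanaCoeff n k := by
  rcases n with _ | n
  · rcases k with _ | k <;> simp [narayana, narayanaCoeff, Polynomial.coeff_one]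
  · simp only [narayana, if_neg n.succ_ne_zero, Polynomial.finsetSum_coeff,
      Polynomial.coeff_C_mul_X_pow, sum_ite_eq, mem_range]
    split_ifs with hk
    · rfl
    · simp [narayanaCoeff, Nat.choose_eq_zero_of_lt (not_lt.mp hk)]

theorem narayanaCoeff_recurrence (m j : ℕ) :
    ((m : ℚ) + 4) * narayanaCoeff (m + 3) (j + 2)
      = (2 * m + 5) * (narayanaCoeff (m + 2) (j + 2) + narayanaCoeff (m + 2) (j + 1))
        - (m + 1) * (narayanaCoeff (m + 1) (j + 2) - 2 * narayanaCoeff (m + 1) (j + 1)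
          + narayanaCoeff (m + 1) j) := by
  -- After this rewrite every term is a rational multiple of `(m + 1).choose j ^ 2`.
  have hm : (m.choose j : ℚ) = (m + 1 - j) * (m + 1).choose j / (m + 1) := by
    have h := Nat.cast_choose_succ_right (K := ℚ) (m + 1) j
    rw [Nat.cast_choose_succ_succ] at h
    push_cast at h
    field_simp at h ⊢
    linear_combination h
  simp only [narayanaCoeff, Nat.add_sub_cancel, Nat.reduceSubDiff, Nat.cast_choose_succ_succ]
  simp only [Nat.cast_choose_succ_right]
  rw [hm]
  push_cast
  field_simp
  ring

theorem narayana_zero : narayana 0 = 1 := by simp [narayana]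

theorem narayana_one : narayana 1 = 1 := by simp [narayana]

theorem narayana_recurrence (n : ℕ) :
    ((n : ℚ[X]) + 3) * narayana (n + 2)
      = (2 * (n : ℚ[X]) + 3) * (1 + Polynomial.X) * narayana (n + 1)
        - (n : ℚ[X]) * (1 - Polynomial.X) ^ 2 * narayana n := by
  have h₁ (p : ℚ[X]) : (1 + Polynomial.X) * p = p + Polynomial.X * p := by ring
  have h₂ (p : ℚ[X]) :
      (1 - Polynomial.X) ^ 2 * p = p - 2 * (Polynomial.X * p)
        + Polynomial.X * (Polynomial.X * p) := by ring
  rw [mul_assoc, mul_assoc, h₁, h₂]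
  ext (_ | _ | j) <;>
    simp only [add_mul, mul_add, mul_sub, mul_assoc, Polynomial.coeff_add, Polynomial.coeff_sub,
      Polynomial.coeff_natCast_mul, Polynomial.coeff_ofNat_mul, Polynomial.coeff_X_mul,
      Polynomial.coeff_X_mul_zero, coeff_narayana]
  · simp [narayanaCoeff]
    ring
  · rcases n with _ | n <;> simp [narayanaCoeff] <;> ring
  · rcases n with _ | m
    · simp [narayanaCoeff, Nat.choose_eq_zero_of_lt]
    · push_cast
      linear_combination narayanaCoeff_recurrence m j

namespace PowerSeries

variable {R : Type*} [CommSemiring R]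

theorem coeff_X_mul_derivative (f : R⟦X⟧) (n : ℕ) :
    coeff n (X * d⁄dX R f) = coeff n f * n := by
  rcases n with _ | n
  · simp
  · rw [coeff_succ_X_mul, coeff_derivative, Nat.cast_succ]

theorem eq_zero_of_derivative_X_mul_eq_X_mul [IsAddTorsionFree R] {y p q : R⟦X⟧}
    (h : d⁄dX R (X * y) = X * (p * (X * d⁄dX R y) + q * y)) : y = 0 := by
  ext n
  induction n using Nat.strong_induction_on with
  | _ n ih =>
  have hrhs : coeff n (X * (p * (X * d⁄dX R y) + q * y)) = 0 := by
    rcases n with _ | m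
    · simp
    have hθ (j : ℕ) (hj : j ≤ m) : coeff j (X * d⁄dX R y) = 0 := by
      rw [coeff_X_mul_derivative, ih j (Nat.lt_succ_of_le hj), map_zero, zero_mul]
    rw [coeff_succ_X_mul, map_add, coeff_mul, coeff_mul,
      sum_eq_zero fun ij hij => by rw [hθ _ (antidiagonal.snd_le hij), mul_zero],
      sum_eq_zero fun ij hij => by rw [ih _ (Nat.antidiagonal.snd_lt hij), map_zero, mul_zero],
      add_zero]
  have hn := congrArg (coeff n) h
  rw [hrhs, coeff_derivative, coeff_succ_X_mul, ← Nat.cast_succ, ← nsmul_eq_mul'] at hn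
  rw [(nsmul_eq_zero_iff_right n.succ_ne_zero).mp hn, map_zero]

end PowerSeries

local notation "t" => (Polynomial.X : ℚ[X])

theorem narGF1_eq_one_add_C_mul : narGF1 = 1 + C t * (narGF0 - 1) := by
  refine PowerSeries.ext fun n => ?_
  rcases n with _ | n <;> simp [narGF1, narGF0, narayana_zero]

theorem derivative_X_mul_narGF0 :
    d⁄dX ℚ[X] (X * narGF0) = 1 + C (1 - t) * X
      + X * (C (1 + t) * narGF0
        + (C (2 * (1 + t)) - C ((1 - t) ^ 2) * X) * (X * d⁄dX ℚ[X] narGF0)) := by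
  refine PowerSeries.ext fun n => ?_
  rcases n with _ | _ | n <;>
    simp only [coeff_derivative, coeff_succ_X_mul, coeff_zero_X_mul, map_add, map_sub, coeff_one,
      coeff_C_mul, coeff_succ_mul_X, add_mul, sub_mul, one_mul, mul_assoc, coeff_X_mul_derivative,
      coeff_C, narGF0, coeff_mk]
  · simp [narayana_zero]
  · simp [narayana_zero, narayana_one]
  · simp only [Nat.cast_add, Nat.cast_one, Nat.add_eq_zero_iff, one_ne_zero, and_false,
      if_false, sub_self, zero_add]
    linear_combination narayana_recurrence n

theorem narGF0_eq_one_add_X_mul_mul : narGF0 = 1 + X * narGF0 * narGF1 := by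
  refine sub_eq_zero.mp (eq_zero_of_derivative_X_mul_eq_X_mul
    (p := C (2 * (1 + t)) - C ((1 - t) ^ 2) * X) (q := C ((1 - t) ^ 2) * X) ?_)
  have h := derivative_X_mul_narGF0
  rw [narGF1_eq_one_add_C_mul]
  simp only [map_add, map_sub, map_mul, map_pow, map_one, map_ofNat, Derivation.leibniz,
    derivative_X, derivative_C, Derivation.map_one_eq_zero, smul_eq_mul] at h ⊢
  -- The multiplier is the partial derivative of the defect with respect to `c₀`.
  linear_combination (1 + X * C t - X - 2 * X * C t * narGF0) * h

/-- The functional equations `c₁ = 1 + x·t·c₀·c₁` and `c₀ = 1 + x·c₀·c₁`. -/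
theorem stmt11 :
    narGF1 = 1 + PowerSeries.X * PowerSeries.C (R := Polynomial ℚ) Polynomial.X * narGF0 * narGF1 ∧
      narGF0 = 1 + PowerSeries.X * narGF0 * narGF1 := by
  have h₀ := narGF0_eq_one_add_X_mul_mul
  refine ⟨?_, h₀⟩
  rw [narGF1_eq_one_add_C_mul] at h₀ ⊢
  linear_combination C t * h₀
end

section
/- Let C_n(t) be the Narayana polynomials, C_0(t) = 1 and C_n(t) = Σ_{k=0}^{n-1} (1/(k+1))·binom(n,k)·binom(n-1,k)·t^k for n > 0. Then for every positive integer n, det((C_{i+j}(t))_{i,j=0}^{n-1}) = t^{binom(n,2)} and det((C_{i+j+1}(t))_{i,j=0}^{n-1}) = t^{binom(n,2)}, as polynomials in t. -/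
open Polynomial Finset Matrix

def bb (i k m : ℕ) : ℚ :=
  match m with
  | 0 => i.choose k
  | m + 1 => (i.choose (k + m + 1)) * (i.choose (m + 1)) -
      (i.choose (k + m + 2)) * (i.choose m)

lemma bb_zero (i k m : ℕ) (h : i < k + m) : bb i k m = 0 := by
  match m with
  | 0 =>
    have : i.choose k = 0 := Nat.choose_eq_zero_of_lt (by omega)
    simp [bb, this]
  | m + 1 =>
    simp [bb, Nat.choose_eq_zero_of_lt (show i < k + m + 1 by omega),
      Nat.choose_eq_zero_of_lt (show i < k + m + 2 by omega)]

lemma bb_diag (i : ℕ) : bb i i 0 = 1 := by simp [bb]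

/-- The main recurrence for `bb`, a pure Pascal identity. -/
lemma bb_rec (i k m : ℕ) :
    bb (i+1) k m = (if k = 0 then 0 else bb i (k-1) m) + bb i k m +
      (if m = 0 then 0 else bb i k (m-1) + bb i (k+1) (m-1)) := by
  match k, m with
  | 0, 0 => simp [bb]
  | (s+1), 0 =>
    have hp : (i+1).choose (s+1) = i.choose s + i.choose (s+1) :=
      Nat.choose_succ_succ' i s
    simp only [bb, if_neg (Nat.succ_ne_zero s), if_pos rfl, Nat.add_sub_cancel, hp]
    push_cast; ring
  | 0, (r+1) =>
    match r with
    | 0 =>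
      have hp1 : (i+1).choose 1 = i.choose 0 + i.choose 1 := Nat.choose_succ_succ' i 0
      have hp2 : (i+1).choose 2 = i.choose 1 + i.choose 2 := Nat.choose_succ_succ' i 1
      simp only [bb, if_neg (Nat.succ_ne_zero 0), if_pos rfl, Nat.add_sub_cancel,
        show (0+0+1:ℕ) = 1 by omega, show (0+0+2:ℕ) = 2 by omega,
        show (0+1:ℕ) = 1 by omega, show (1+0+1:ℕ) = 2 by omega,
        hp1, hp2, Nat.choose_zero_right, Nat.choose_one_right]
      push_cast; ring
    | (r+1) =>
      have hp1 : (i+1).choose (r+1) = i.choose r + i.choose (r+1) :=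
        Nat.choose_succ_succ' i r
      have hp2 : (i+1).choose (r+2) = i.choose (r+1) + i.choose (r+2) :=
        Nat.choose_succ_succ' i (r+1)
      have hp3 : (i+1).choose (r+3) = i.choose (r+2) + i.choose (r+3) :=
        Nat.choose_succ_succ' i (r+2)
      simp only [bb, if_neg (Nat.succ_ne_zero _), if_pos rfl, Nat.add_sub_cancel,
        show (0+(r+1)+1:ℕ) = r+2 by omega, show (0+(r+1)+2:ℕ) = r+3 by omega,
        show (0+r+1:ℕ) = r+1 by omega, show (0+r+2:ℕ) = r+2 by omega,
        show (1+r+1:ℕ) = r+2 by omega, show (1+r+2:ℕ) = r+3 by omega,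
        show (r+1+1:ℕ) = r+2 by omega,
        hp1, hp2, hp3]
      push_cast; ring
  | (s+1), (r+1) =>
    match r with
    | 0 =>
      have hp1 : (i+1).choose (s+2) = i.choose (s+1) + i.choose (s+2) :=
        Nat.choose_succ_succ' i (s+1)
      have hp2 : (i+1).choose (s+3) = i.choose (s+2) + i.choose (s+3) :=
        Nat.choose_succ_succ' i (s+2)
      have hp3 : (i+1).choose 1 = i.choose 0 + i.choose 1 := Nat.choose_succ_succ' i 0
      simp only [bb, if_neg (Nat.succ_ne_zero _), Nat.add_sub_cancel,
        show (s+1+0+1:ℕ) = s+2 by omega, show (s+1+0+2:ℕ) = s+3 by omega,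
        show (s+1-1:ℕ) = s by omega, show (s+0+1:ℕ) = s+1 by omega,
        show (s+0+2:ℕ) = s+2 by omega, show (s+1+1:ℕ) = s+2 by omega,
        show (s+1+2:ℕ) = s+3 by omega, show (0+1:ℕ) = 1 by omega,
        hp1, hp2, hp3, Nat.choose_zero_right, Nat.choose_one_right]
      push_cast; ring
    | (r+1) =>
      have hp1 : (i+1).choose (s+r+3) = i.choose (s+r+2) + i.choose (s+r+3) :=
        Nat.choose_succ_succ' i (s+r+2)
      have hp2 : (i+1).choose (s+r+4) = i.choose (s+r+3) + i.choose (s+r+4) :=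
        Nat.choose_succ_succ' i (s+r+3)
      have hp3 : (i+1).choose (r+2) = i.choose (r+1) + i.choose (r+2) :=
        Nat.choose_succ_succ' i (r+1)
      have hp4 : (i+1).choose (r+1) = i.choose r + i.choose (r+1) :=
        Nat.choose_succ_succ' i r
      simp only [bb, if_neg (Nat.succ_ne_zero _), Nat.add_sub_cancel,
        show (s+1-1:ℕ) = s by omega,
        show (s+1+(r+1)+1:ℕ) = s+r+3 by omega, show (s+(r+1)+2:ℕ) = s+r+3 by omega,
        show (s+1+r+2:ℕ) = s+r+3 by omega, show (s+1+1+r+1:ℕ) = s+r+3 by omega,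
        show (s+1+(r+1)+2:ℕ) = s+r+4 by omega, show (s+1+1+r+2:ℕ) = s+r+4 by omega,
        show (s+(r+1)+1:ℕ) = s+r+2 by omega, show (s+1+r+1:ℕ) = s+r+2 by omega,
        show (r+1+1:ℕ) = r+2 by omega,
        hp1, hp2, hp3, hp4]
      push_cast; ring


noncomputable def Bp (i k : ℕ) : Polynomial ℚ :=
  ∑ m ∈ Finset.range (i+1), Polynomial.C (bb i k m) * Polynomial.X ^ m

lemma Bp_eq (i k n : ℕ) (h : i < n) :
    Bp i k = ∑ m ∈ Finset.range n, Polynomial.C (bb i k m) * Polynomial.X ^ m := by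
  unfold Bp
  apply Finset.sum_subset
  · intro x hx; simp only [Finset.mem_range] at *; omega
  · intro x _ hx
    simp only [Finset.mem_range, not_lt] at hx
    rw [bb_zero i k x (by omega)]; simp

lemma Bp_vanish (i k : ℕ) (h : i < k) : Bp i k = 0 := by
  unfold Bp
  apply Finset.sum_eq_zero
  intro m _
  rw [bb_zero i k m (by omega)]; simp

lemma Bp_diag (i : ℕ) : Bp i i = 1 := by
  unfold Bp
  rw [Finset.sum_eq_single 0]
  · rw [bb_diag]; simp
  · intro m _ hm
    match m, hm with
    | (m+1), _ => rw [bb_zero i i (m+1) (by omega)]; simp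
  · intro h; simp at h

/-- Polynomial-level recurrence for `Bp`. -/
lemma Bp_rec (i k : ℕ) :
    Bp (i+1) k = (if k = 0 then 0 else Bp i (k-1)) +
      (1 + Polynomial.X) * Bp i k + Polynomial.X * Bp i (k+1) := by
  rw [Bp_eq (i+1) k (i+1+1) (by omega)]
  -- LHS over range (i+2)
  have L : ∑ m ∈ Finset.range (i+1+1), Polynomial.C (bb (i+1) k m) * Polynomial.X ^ m
      = ∑ m ∈ Finset.range (i+1+1),
          ((if k = 0 then 0 else Polynomial.C (bb i (k-1) m)) + Polynomial.C (bb i k m)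
            + (if m = 0 then 0 else Polynomial.C (bb i k (m-1)) + Polynomial.C (bb i (k+1) (m-1))))
          * Polynomial.X ^ m := by
    apply Finset.sum_congr rfl
    intro m _
    congr 1
    rw [bb_rec]
    split_ifs <;> simp
  rw [L]
  have split : ∀ (f g h : ℕ → Polynomial ℚ),
      ∑ m ∈ Finset.range (i+1+1), (f m + g m + h m) * Polynomial.X ^ m
      = (∑ m ∈ Finset.range (i+1+1), f m * Polynomial.X ^ m)
        + (∑ m ∈ Finset.range (i+1+1), g m * Polynomial.X ^ m)
        + (∑ m ∈ Finset.range (i+1+1), h m * Polynomial.X ^ m) := by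
    intro f g h
    rw [← Finset.sum_add_distrib, ← Finset.sum_add_distrib]
    apply Finset.sum_congr rfl; intro m _; ring
  rw [split]
  have S1 : (∑ m ∈ Finset.range (i+1+1),
      (if k = 0 then 0 else Polynomial.C (bb i (k-1) m)) * Polynomial.X ^ m)
      = (if k = 0 then 0 else Bp i (k-1)) := by
    by_cases hk : k = 0
    · simp [hk]
    · simp only [if_neg hk]
      rw [Bp_eq i (k-1) (i+1+1) (by omega)]
  have S2 : (∑ m ∈ Finset.range (i+1+1), Polynomial.C (bb i k m) * Polynomial.X ^ m)
      = Bp i k := (Bp_eq i k (i+1+1) (by omega)).symm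
  have S3 : (∑ m ∈ Finset.range (i+1+1),
      (if m = 0 then 0 else Polynomial.C (bb i k (m-1)) + Polynomial.C (bb i (k+1) (m-1)))
        * Polynomial.X ^ m)
      = Polynomial.X * Bp i k + Polynomial.X * Bp i (k+1) := by
    rw [Finset.sum_range_succ']
    simp only [if_neg (Nat.succ_ne_zero _), Nat.add_sub_cancel, ite_true,
      if_pos (rfl : (0:ℕ) = 0), zero_mul, add_zero]
    rw [Bp_eq i k (i+1) (by omega), Bp_eq i (k+1) (i+1) (by omega)]
    rw [Finset.mul_sum, Finset.mul_sum, ← Finset.sum_add_distrib]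
    apply Finset.sum_congr rfl; intro m _
    rw [pow_succ]
    ring
  rw [S1, S2, S3]
  ring

section
variable (F : ℕ → ℕ → Polynomial ℚ) (w : ℕ → Polynomial ℚ)

lemma aux_shift (N : ℕ) (hN : 0 < N) (u v : ℕ → Polynomial ℚ) (hv : v N = 0) :
    ∑ k ∈ Finset.range N, (if k = 0 then 0 else u (k-1)) * v k * Polynomial.X ^ k
      = ∑ k ∈ Finset.range N, u k * (Polynomial.X * v (k+1)) * Polynomial.X ^ k := by
  obtain ⟨N', rfl⟩ : ∃ N', N = N' + 1 := ⟨N - 1, by omega⟩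
  rw [Finset.sum_range_succ']
  simp only [if_neg (Nat.succ_ne_zero _), Nat.add_sub_cancel,
    if_pos (rfl : (0:ℕ) = 0), if_true, eq_self_iff_true, zero_mul, add_zero]
  rw [Finset.sum_range_succ, hv]
  simp only [mul_zero, zero_mul, add_zero]
  apply Finset.sum_congr rfl; intro k _
  rw [pow_succ]; ring

lemma swap_lemma
    (hrec : ∀ i k, F (i+1) k = (if k = 0 then 0 else F i (k-1)) + w k * F i k
      + Polynomial.X * F i (k+1))
    (hvan : ∀ i k, i < k → F i k = 0)
    (i j N : ℕ) (hi : i < N) (hj : j < N) :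
    ∑ k ∈ Finset.range N, F (i+1) k * F j k * Polynomial.X ^ k
      = ∑ k ∈ Finset.range N, F i k * F (j+1) k * Polynomial.X ^ k := by
  have eL : ∑ k ∈ Finset.range N, F (i+1) k * F j k * Polynomial.X ^ k
      = (∑ k ∈ Finset.range N, (if k = 0 then 0 else F i (k-1)) * F j k * Polynomial.X ^ k)
        + ((∑ k ∈ Finset.range N, w k * F i k * F j k * Polynomial.X ^ k)
        + (∑ k ∈ Finset.range N, F j k * (Polynomial.X * F i (k+1)) * Polynomial.X ^ k)) := by
    rw [← Finset.sum_add_distrib, ← Finset.sum_add_distrib]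
    apply Finset.sum_congr rfl; intro k _; rw [hrec i k]
    split_ifs <;> ring
  have eR : ∑ k ∈ Finset.range N, F i k * F (j+1) k * Polynomial.X ^ k
      = (∑ k ∈ Finset.range N, (if k = 0 then 0 else F j (k-1)) * F i k * Polynomial.X ^ k)
        + ((∑ k ∈ Finset.range N, w k * F i k * F j k * Polynomial.X ^ k)
        + (∑ k ∈ Finset.range N, F i k * (Polynomial.X * F j (k+1)) * Polynomial.X ^ k)) := by
    rw [← Finset.sum_add_distrib, ← Finset.sum_add_distrib]
    apply Finset.sum_congr rfl; intro k _; rw [hrec j k]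
    split_ifs <;> ring
  rw [eL, eR, aux_shift N (by omega) (F i) (F j) (hvan j N hj),
    aux_shift N (by omega) (F j) (F i) (hvan i N hi)]
  ring

lemma key_lemma
    (hrec : ∀ i k, F (i+1) k = (if k = 0 then 0 else F i (k-1)) + w k * F i k
      + Polynomial.X * F i (k+1))
    (hvan : ∀ i k, i < k → F i k = 0)
    (h0 : ∀ k, F 0 k = if k = 0 then 1 else 0) :
    ∀ i j N, i + j < N →
      ∑ k ∈ Finset.range N, F i k * F j k * Polynomial.X ^ k = F (i+j) 0 := by
  intro i
  induction i with
  | zero =>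
    intro j N hN
    rw [Finset.sum_eq_single 0]
    · rw [h0]; simp
    · intro k _ hk; rw [h0, if_neg hk]; simp
    · intro h; exact absurd (Finset.mem_range.mpr (by omega)) h
  | succ i ih =>
    intro j N hN
    rw [swap_lemma F w hrec hvan i j N (by omega) (by omega), ih (j+1) N (by omega),
      show i + (j+1) = i + 1 + j by omega]
end



lemma Bp_h0 (k : ℕ) : Bp 0 k = if k = 0 then 1 else 0 := by
  unfold Bp
  rcases k with _ | k
  · simp [bb]
  · simp [bb, Nat.choose_eq_zero_of_lt (Nat.succ_pos k)]

noncomputable def Ap (i k : ℕ) : Polynomial ℚ :=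
  match i with
  | 0 => if k = 0 then 1 else 0
  | i + 1 => Bp i k + (if k = 0 then 0 else Bp i (k-1))

lemma Ap_h0 (k : ℕ) : Ap 0 k = if k = 0 then 1 else 0 := rfl

lemma Ap_vanish (i k : ℕ) (h : i < k) : Ap i k = 0 := by
  match i with
  | 0 => rw [Ap_h0, if_neg (by omega)]
  | i + 1 =>
    show Bp i k + _ = 0
    rw [Bp_vanish i k (by omega), if_neg (by omega), Bp_vanish i (k-1) (by omega)]
    simp

lemma Ap_diag (i : ℕ) : Ap i i = 1 := by
  match i with
  | 0 => rfl
  | i + 1 =>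
    show Bp i (i+1) + _ = 1
    rw [Bp_vanish i (i+1) (by omega), if_neg (by omega), Nat.add_sub_cancel, Bp_diag]
    simp

lemma Ap_rec (i k : ℕ) :
    Ap (i+1) k = (if k = 0 then 0 else Ap i (k-1)) +
      (if k = 0 then 1 else 1 + Polynomial.X) * Ap i k + Polynomial.X * Ap i (k+1) := by
  match i with
  | 0 =>
    rcases k with _ | s
    · show Bp 0 0 + _ = _
      simp [Bp_h0, Ap_h0]
    · show Bp 0 (s+1) + _ = _
      simp only [Bp_h0, Ap_h0, if_neg (Nat.succ_ne_zero s), Nat.add_sub_cancel]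
      rcases s with _ | s <;> simp
  | i + 1 =>
    rcases k with _ | s
    · show Bp (i+1) 0 + _ = _
      rw [Bp_rec i 0]
      simp only [if_pos rfl]
      show _ = 0 + 1 * (Bp i 0 + _) + Polynomial.X * (Bp i 1 + if (1:ℕ) = 0 then 0 else Bp i 0)
      simp only [if_pos rfl, if_neg (Nat.one_ne_zero), Nat.sub_self, if_true]
      ring
    · show Bp (i+1) (s+1) + (if s+1 = 0 then 0 else Bp (i+1) s) = _
      rw [if_neg (Nat.succ_ne_zero s), Nat.add_sub_cancel, Bp_rec i (s+1), Bp_rec i s]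
      show _ = (Bp i s + if s = 0 then 0 else Bp i (s-1)) +
        (1 + Polynomial.X) * (Bp i (s+1) + if s+1 = 0 then 0 else Bp i (s+1-1)) +
        Polynomial.X * (Bp i (s+2) + if s+2 = 0 then 0 else Bp i (s+2-1))
      simp only [if_neg (Nat.succ_ne_zero s), if_neg (Nat.succ_ne_zero (s+1)),
        Nat.add_sub_cancel, if_neg (Nat.succ_ne_zero _)]
      show (if s+1 = 0 then 0 else Bp i s) + (1+Polynomial.X) * Bp i (s+1) +
          Polynomial.X * Bp i (s+2) +
          ((if s = 0 then 0 else Bp i (s-1)) + (1+Polynomial.X) * Bp i s +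
            Polynomial.X * Bp i (s+1)) = _
      rw [if_neg (Nat.succ_ne_zero s)]
      simp only [show (s+2-1 : ℕ) = s+1 from rfl]
      ring

lemma bb_nar (i m : ℕ) : bb i 0 m = (1/(m+1 : ℚ)) * ((i+1).choose m) * (i.choose m) := by
  match m with
  | 0 => simp [bb]
  | (r+1) =>
    by_cases h : r + 1 ≤ i
    · have hq : i - r = (i - (r+1)) + 1 := by omega
      have h1 : ((i.choose (r+2) : ℚ)) * (r+2) = (i.choose (r+1)) * (i - (r+1) : ℕ) := by
        exact_mod_cast Nat.choose_succ_right_eq i (r+1)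
      have h2 : ((i.choose (r+1) : ℚ)) * (r+1) = (i.choose r) * ((i - (r+1) : ℕ) + 1) := by
        have := Nat.choose_succ_right_eq i r
        rw [hq] at this
        exact_mod_cast this
      have h3 : (((i+1).choose (r+1) : ℚ)) = (i.choose r) + (i.choose (r+1)) := by
        exact_mod_cast Nat.choose_succ_succ' i r
      have key : ((r:ℚ)+2) * bb i 0 (r+1) = ((i+1).choose (r+1)) * (i.choose (r+1)) := by
        simp only [bb, show (0+r+1 : ℕ) = r+1 by omega, show (0+r+2 : ℕ) = r+2 by omega]
        linear_combination (-(↑(i.choose (r+1)) : ℚ)) * h3 - (↑(i.choose r) : ℚ) * h1 +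
          (↑(i.choose (r+1)) : ℚ) * h2
      have h4 : ((r:ℚ)+1+1) ≠ 0 := by positivity
      rw [eq_comm, one_div, inv_mul_eq_div, div_mul_eq_mul_div, div_eq_iff (by push_cast; positivity)]
      push_cast
      linear_combination -key
    · rw [bb_zero i 0 (r+1) (by omega),
        Nat.choose_eq_zero_of_lt (show i < r+1 by omega)]
      simp




lemma narayana_eq_Bp (i : ℕ) : narayana (i+1) = Bp i 0 := by
  unfold narayana Bp
  rw [if_neg (Nat.succ_ne_zero i)]
  apply Finset.sum_congr rfl
  intro k _
  congr 1
  rw [bb_nar, Nat.add_sub_cancel]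

lemma narayana_eq_Ap (n : ℕ) : narayana n = Ap n 0 := by
  match n with
  | 0 => simp [narayana, Ap]
  | (i+1) =>
    rw [narayana_eq_Bp]
    show _ = Bp i 0 + _
    simp

lemma det_hankel_eq (n : ℕ) (G : ℕ → ℕ → Polynomial ℚ)
    (hvan : ∀ i k, i < k → G i k = 0) (hdiag : ∀ i, G i i = 1)
    (A : Matrix (Fin n) (Fin n) (Polynomial ℚ))
    (hA : ∀ i j : Fin n, A i j
      = ∑ k ∈ Finset.range n, G i k * G j k * Polynomial.X ^ k) :
    A.det = Polynomial.X ^ n.choose 2 := by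
  have hA' : A = (Matrix.of fun i k : Fin n => G i k)
      * Matrix.diagonal (fun k : Fin n => Polynomial.X ^ (k:ℕ))
      * (Matrix.of fun i k : Fin n => G i k)ᵀ := by
    apply Matrix.ext
    intro i j
    rw [hA, Matrix.mul_apply]
    rw [← Fin.sum_univ_eq_sum_range (fun k => G i k * G j k * Polynomial.X ^ k) n]
    apply Finset.sum_congr rfl
    intro k _
    rw [Matrix.mul_diagonal]
    simp only [Matrix.of_apply, Matrix.transpose_apply]
    ring
  rw [hA', Matrix.det_mul, Matrix.det_mul, Matrix.det_transpose]
  have hdetG : (Matrix.of fun i k : Fin n => G i k).det = 1 := by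
    rw [Matrix.det_of_lowerTriangular _ (by
      intro i j hij
      exact hvan i j (by exact_mod_cast hij))]
    simp [hdiag]
  have hdetD : (Matrix.diagonal fun k : Fin n => (Polynomial.X : Polynomial ℚ) ^ (k:ℕ)).det
      = Polynomial.X ^ n.choose 2 := by
    rw [Matrix.det_diagonal, Finset.prod_pow_eq_pow_sum]
    congr 1
    rw [Fin.sum_univ_eq_sum_range (fun i => i) n]
    have h2 := Finset.sum_range_id_mul_two n
    rw [Nat.choose_two_right]
    omega
  rw [hdetG, hdetD]
  ring

/-- The Hankel determinants of Narayana polynomials: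
`det((C_{i+j}(t)))_{i,j=0}^{n-1} = det((C_{i+j+1}(t)))_{i,j=0}^{n-1} = t^{binom(n,2)}`. -/
theorem stmt19 (n : ℕ) (hn : 0 < n) :
    Matrix.det (Matrix.of fun i j : Fin n => narayana (i + j)) =
        Polynomial.X ^ n.choose 2 ∧
      Matrix.det (Matrix.of fun i j : Fin n => narayana (i + j + 1)) =
        Polynomial.X ^ n.choose 2 := by
  have keyA := key_lemma Ap (fun k => if k = 0 then 1 else 1 + Polynomial.X)
    Ap_rec Ap_vanish Ap_h0
  have keyB := key_lemma Bp (fun _ => 1 + Polynomial.X) Bp_rec Bp_vanish Bp_h0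
  have shrink : ∀ (G : ℕ → ℕ → Polynomial ℚ), (∀ i k, i < k → G i k = 0) →
      ∀ (i j : Fin n), ∑ k ∈ Finset.range (n + ↑i + ↑j + 1), G ↑i k * G ↑j k * Polynomial.X ^ k
        = ∑ k ∈ Finset.range n, G ↑i k * G ↑j k * Polynomial.X ^ k := by
    intro G hvan i j
    rw [eq_comm]
    apply Finset.sum_subset
    · intro x hx; simp only [Finset.mem_range] at *; omega
    · intro x _ hx
      simp only [Finset.mem_range, not_lt] at hx
      rw [hvan ↑i x (by have := i.isLt; omega)]
      ring
  constructor
  · apply det_hankel_eq n Ap Ap_vanish Ap_diag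
    intro i j
    rw [Matrix.of_apply, ← shrink Ap Ap_vanish i j,
      keyA ↑i ↑j (n + ↑i + ↑j + 1) (by have := i.isLt; omega), narayana_eq_Ap]
  · apply det_hankel_eq n Bp Bp_vanish Bp_diag
    intro i j
    rw [Matrix.of_apply, ← shrink Bp Bp_vanish i j,
      keyB ↑i ↑j (n + ↑i + ↑j + 1) (by have := i.isLt; omega),
      ← narayana_eq_Bp]
end
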